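/- arXiv:1306.4143 — 11 statements merged into one kernel-verified Lean document; each statement's English description precedes it below -/
import Mathlib

section
/- Let n ≥ 4 and 2 ≤ a ≤ n−1 be integers. A point v ∈ ℂⁿ satisfies the critical-point equations of Z^n_a, namely a·v_j^{a−1} = ∏_{k≠j} v_k for every index j, if and only if either v = 0, or there exists ξ ∈ ℂ with ξ^{n−a} = a^a such that v_j^a = ξ for every j and ∏_{j} v_j = a·ξ. -/
/-!
Away from `v = 0` every coordinate is nonzero, since a vanishing `v j` forces all products
`∏ k ≠ i, v k` with `i ≠ j` to vanish. Multiplying the `j`-th equation by `v j` then turns it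
into `a * v j ^ a = ∏ k, v k`, so `ξ := v j ^ a` is independent of `j` and `∏ v = a ξ`; raising
this to the `a`-th power gives `a ^ a ξ ^ a = ξ ^ n`, i.e. `ξ ^ (n - a) = a ^ a`.
-/

open Finset

/-- `v` is a critical point of `Z_a(u) = -∏ k, u k + ∑ k, u k ^ a`. -/
def IsCriticalZ {ι K : Type*} [Fintype ι] [DecidableEq ι] [CommRing K] (a : ℕ) (v : ι → K) :
    Prop :=
  ∀ j, (a : K) * v j ^ (a - 1) = ∏ k ∈ univ.erase j, v k

namespace IsCriticalZ

variable {ι K : Type*} [Fintype ι] [DecidableEq ι] [CommRing K] {a : ℕ} {v : ι → K}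

theorem zero [Nontrivial ι] (ha : 2 ≤ a) : IsCriticalZ a (0 : ι → K) := by
  intro j
  obtain ⟨k, hk⟩ := exists_ne j
  rw [prod_eq_zero (mem_erase.mpr ⟨hk, mem_univ k⟩) rfl, Pi.zero_apply,
    zero_pow (by omega), mul_zero]

theorem eq_zero_of_apply_eq_zero [IsDomain K] (h : IsCriticalZ a v) (ha : 2 ≤ a)
    (ha0 : (a : K) ≠ 0) {j : ι} (hj : v j = 0) : v = 0 := by
  funext i
  rcases eq_or_ne i j with rfl | hij
  · exact hj
  · have hi := h i
    rw [prod_eq_zero (mem_erase.mpr ⟨hij.symm, mem_univ j⟩) hj, mul_eq_zero] at hi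
    exact pow_eq_zero_iff (by omega) |>.mp (hi.resolve_left ha0)

theorem iff_of_forall_ne_zero [IsDomain K] [Nonempty ι] (ha0 : (a : K) ≠ 0)
    (hv : ∀ j, v j ≠ 0) :
    IsCriticalZ a v ↔ ∃ ξ : K, (∀ j, v j ^ a = ξ) ∧ ∏ j, v j = a * ξ := by
  have ha : a ≠ 0 := by rintro rfl; exact ha0 Nat.cast_zero
  have key : ∀ j, (a : K) * v j ^ (a - 1) = ∏ k ∈ univ.erase j, v k ↔
      (a : K) * v j ^ a = ∏ k, v k := fun j => by
    rw [← prod_erase_mul univ v (mem_univ j), ← pow_sub_one_mul ha, ← mul_assoc,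
      mul_left_inj' (hv j)]
  simp only [IsCriticalZ, key]
  constructor
  · intro h
    obtain ⟨j₀⟩ := ‹Nonempty ι›
    exact ⟨v j₀ ^ a, fun j => mul_left_cancel₀ ha0 ((h j).trans (h j₀).symm), (h j₀).symm⟩
  · rintro ⟨ξ, hξ, hP⟩ j
    rw [hξ, hP]

end IsCriticalZ

theorem pow_card_sub_eq_of_prod_eq {ι K : Type*} [Fintype ι] [CommRing K] [IsDomain K]
    {a : ℕ} {v : ι → K} {ξ : K} (hv : ∀ j, v j ^ a = ξ) (hP : ∏ j, v j = a * ξ) (hξ : ξ ≠ 0)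
    (ha : a ≤ Fintype.card ι) : ξ ^ (Fintype.card ι - a) = (a : K) ^ a := by
  have h : (a : K) ^ a * ξ ^ a = ξ ^ (Fintype.card ι - a) * ξ ^ a := by
    rw [← mul_pow, ← hP, ← prod_pow, ← pow_add, Nat.sub_add_cancel ha]
    simp only [hv, prod_const, card_univ]
  exact (mul_right_cancel₀ (pow_ne_zero _ hξ) h).symm

theorem critical_points_of_Zna_general (n a : ℕ) (ha : 2 ≤ a) (han : a ≤ n - 1)
    (v : Fin n → ℂ) :
    (∀ j, (a : ℂ) * v j ^ (a - 1) = ∏ k ∈ Finset.univ.erase j, v k) ↔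
      (v = 0 ∨ ∃ ξ : ℂ, ξ ^ (n - a) = (a : ℂ) ^ a ∧ (∀ j, v j ^ a = ξ) ∧
        ∏ j, v j = (a : ℂ) * ξ) := by
  have ha0 : (a : ℂ) ≠ 0 := Nat.cast_ne_zero.mpr (by omega)
  have : Nontrivial (Fin n) := Fin.nontrivial_iff_two_le.mpr (by omega)
  change IsCriticalZ a v ↔ _
  constructor
  · intro h
    by_cases hz : ∃ j, v j = 0
    · obtain ⟨j, hj⟩ := hz
      exact .inl (h.eq_zero_of_apply_eq_zero ha ha0 hj)
    · push Not at hz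
      obtain ⟨ξ, hξ, hP⟩ := (IsCriticalZ.iff_of_forall_ne_zero ha0 hz).mp h
      have hξ0 : ξ ≠ 0 := hξ ⟨0, by omega⟩ ▸ pow_ne_zero a (hz _)
      have hpow := pow_card_sub_eq_of_prod_eq hξ hP hξ0 (by rw [Fintype.card_fin]; omega)
      exact .inr ⟨ξ, Fintype.card_fin n ▸ hpow, hξ, hP⟩
  · rintro (rfl | ⟨ξ, hpow, hξ, hP⟩)
    · exact IsCriticalZ.zero ha
    · have hξ0 : ξ ≠ 0 := by
        rintro rfl
        exact pow_ne_zero a ha0 (hpow ▸ zero_pow (by omega))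
      have hv : ∀ j, v j ≠ 0 := fun j => ne_zero_pow (by omega) ((hξ j).symm ▸ hξ0)
      exact (IsCriticalZ.iff_of_forall_ne_zero ha0 hv).mpr ⟨ξ, hξ, hP⟩

/-- For `n ≥ 4` and `2 ≤ a ≤ n−1`, a point `v ∈ ℂⁿ` satisfies the
critical-point equations of `Z^n_a`, namely `a·v_j^{a−1} = ∏_{k≠j} v_k` for every `j`,
iff either `v = 0` or there is `ξ` with `ξ^{n−a} = a^a`, `v_j^a = ξ` for all `j`, and
`∏_j v_j = a·ξ`. -/
theorem critical_points_of_Zna (n a : ℕ) (hn : 4 ≤ n) (ha : 2 ≤ a) (han : a ≤ n - 1)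
    (v : Fin n → ℂ) :
    (∀ j, (a : ℂ) * v j ^ (a - 1) = ∏ k ∈ Finset.univ.erase j, v k) ↔
      (v = 0 ∨ ∃ ξ : ℂ, ξ ^ (n - a) = (a : ℂ) ^ a ∧ (∀ j, v j ^ a = ξ) ∧
        ∏ j, v j = (a : ℂ) * ξ) :=
  critical_points_of_Zna_general n a ha han v
end

section
/- Let n ≥ 4 and 2 ≤ a ≤ n−1 be integers. If v ∈ ℂⁿ is a nonzero point satisfying a·v_j^{a−1} = ∏_{k≠j} v_k for every j, then the critical value is Z^n_a(v) = (n−a)·v₁^a, and moreover ξ := v₁^a satisfies ξ^{n−a} = a^a and ξ ≠ 0. -/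
/-!
Multiplying the `j`-th critical equation by `v j` gives `a * v j ^ a = ∏ k, v k` for every `j`.
Hence all `v j ^ a` equal one value `ξ`, the product is `a * ξ`, and it is nonzero because `v ≠ 0`.
Taking the product of `v j ^ a = ξ` over `j` gives `ξ ^ n = (a * ξ) ^ a`, so `ξ ^ (n - a) = a ^ a`,
and `Z(v) = -a * ξ + n * ξ`.
-/

open Finset

section CriticalPoint

variable {ι M : Type*} [Fintype ι] {a : ℕ} {c : M} {v : ι → M}

theorem mul_pow_eq_prod_of_critical [DecidableEq ι] [CommMonoid M] (ha : a ≠ 0)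
    (hcrit : ∀ j, c * v j ^ (a - 1) = ∏ k ∈ univ.erase j, v k) (j : ι) :
    c * v j ^ a = ∏ k, v k := by
  obtain ⟨b, rfl⟩ := Nat.exists_eq_add_one.mpr (Nat.pos_of_ne_zero ha)
  rw [← mul_prod_erase univ v (mem_univ j), ← hcrit j, Nat.add_sub_cancel, pow_succ']
  ac_rfl

variable [CommMonoidWithZero M] [IsCancelMulZero M]

theorem pow_eq_pow_of_mul_pow_eq_prod (hc : c ≠ 0) (hkey : ∀ j, c * v j ^ a = ∏ k, v k)
    (i j : ι) : v i ^ a = v j ^ a :=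
  mul_left_cancel₀ hc ((hkey i).trans (hkey j).symm)

theorem pow_ne_zero_of_mul_pow_eq_prod (hc : c ≠ 0) (ha : a ≠ 0) (hv : v ≠ 0)
    (hkey : ∀ j, c * v j ^ a = ∏ k, v k) (i : ι) : v i ^ a ≠ 0 := by
  intro hi
  refine hv (funext fun j => ?_)
  rw [Pi.zero_apply, ← pow_eq_zero_iff ha, pow_eq_pow_of_mul_pow_eq_prod hc hkey j i, hi]

theorem pow_card_sub_eq_of_mul_pow_eq_prod (hc : c ≠ 0) (hle : a ≤ Fintype.card ι) (i : ι)
    (hξ : v i ^ a ≠ 0) (hkey : ∀ j, c * v j ^ a = ∏ k, v k) :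
    (v i ^ a) ^ (Fintype.card ι - a) = c ^ a := by
  have hprod : (v i ^ a) ^ Fintype.card ι = (c * v i ^ a) ^ a := by
    rw [← card_univ, ← prod_const, hkey i, ← prod_pow]
    exact prod_congr rfl fun j _ => pow_eq_pow_of_mul_pow_eq_prod hc hkey i j
  rw [mul_pow, ← Nat.sub_add_cancel hle, pow_add] at hprod
  exact mul_right_cancel₀ (pow_ne_zero a hξ) hprod

theorem neg_prod_add_sum_pow_eq_of_mul_pow_eq_prod {R : Type*} [CommRing R] [IsDomain R]
    {c : R} {v : ι → R} (hc : c ≠ 0) (hkey : ∀ j, c * v j ^ a = ∏ k, v k) (i : ι) :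
    -∏ j, v j + ∑ j, v j ^ a = ((Fintype.card ι : R) - c) * v i ^ a := by
  rw [← hkey i, Fintype.sum_congr _ _ fun j => pow_eq_pow_of_mul_pow_eq_prod hc hkey j i,
    sum_const, card_univ, nsmul_eq_mul]
  ring

end CriticalPoint

/-- For `n ≥ 4`, `2 ≤ a ≤ n−1`, if `v ∈ ℂⁿ` is a nonzero point satisfying
the critical-point equations `a·v_j^{a−1} = ∏_{k≠j} v_k` for every `j`, then the critical
value is `Z^n_a(v) = (n−a)·v₁^a`, and `ξ := v₁^a` satisfies `ξ^{n−a} = a^a` and `ξ ≠ 0`. -/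
theorem critical_value_of_Zna (n a : ℕ) (hn : 4 ≤ n) (ha : 2 ≤ a) (han : a ≤ n - 1)
    (v : Fin n → ℂ) (hv0 : v ≠ 0)
    (hcrit : ∀ j, (a : ℂ) * v j ^ (a - 1) = ∏ k ∈ Finset.univ.erase j, v k) :
    (-∏ j, v j + ∑ j, v j ^ a) = ((n : ℂ) - (a : ℂ)) * v ⟨0, by omega⟩ ^ a ∧
      (v ⟨0, by omega⟩ ^ a) ^ (n - a) = (a : ℂ) ^ a ∧
      v ⟨0, by omega⟩ ^ a ≠ 0 := by
  set i₀ : Fin n := ⟨0, by omega⟩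
  have ha₀ : a ≠ 0 := by omega
  have hc : (a : ℂ) ≠ 0 := Nat.cast_ne_zero.mpr ha₀
  have hkey := mul_pow_eq_prod_of_critical ha₀ hcrit
  have hξ := pow_ne_zero_of_mul_pow_eq_prod hc ha₀ hv0 hkey i₀
  refine ⟨?_, ?_, hξ⟩
  · simpa only [Fintype.card_fin] using neg_prod_add_sum_pow_eq_of_mul_pow_eq_prod hc hkey i₀
  · have hle : a ≤ Fintype.card (Fin n) := by rw [Fintype.card_fin]; omega
    simpa only [Fintype.card_fin] using pow_card_sub_eq_of_mul_pow_eq_prod hc hle i₀ hξ hkey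
end

section
/- Let n ≥ 4 and 2 ≤ a ≤ n−1 be integers. Suppose v, w ∈ ℂⁿ are both nonzero points satisfying a·v_j^{a−1} = ∏_{k≠j} v_k and a·w_j^{a−1} = ∏_{k≠j} w_k for every j, and suppose Z^n_a(v) = Z^n_a(w). Then there exists a unique ζ ∈ ℂⁿ with ζ_j^a = 1 for every j and ∏_j ζ_j = 1, such that w_j = ζ_j·v_j for every j. -/
/-!
At a critical point, multiplying the `j`-th equation by `v j` gives `a * v j ^ a = ∏ k, v k`
for every `j`. Summing over `j` shows `a * Z(v) = (n - a) * ∏ k, v k`, so for `a ≠ n` the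
critical value determines the product `∏ k, v k`, and with it every `v j ^ a`. If `v ≠ 0`
then no coordinate vanishes (one zero coordinate forces all the others to vanish), so
`ζ = w / v` is the required, and obviously unique, character.
-/

open Finset

variable {ι K : Type*} [Fintype ι] [DecidableEq ι] [Field K]

/-- The polynomial `Z^n_a`, with coordinates indexed by `ι`. -/
def potentialZ (a : ℕ) (v : ι → K) : K :=
  -∏ j, v j + ∑ j, v j ^ a

def IsCriticalPointZ (a : ℕ) (v : ι → K) : Prop :=
  ∀ j, (a : K) * v j ^ (a - 1) = ∏ k ∈ univ.erase j, v k

namespace IsCriticalPointZ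

variable {a : ℕ} {v w : ι → K}

theorem mul_pow_eq_prod (hv : IsCriticalPointZ a v) (j : ι) :
    (a : K) * v j ^ a = ∏ k, v k := by
  rw [← mul_prod_erase univ v (mem_univ j), ← hv j]
  rcases a with _ | a
  · simp
  · rw [Nat.add_sub_cancel, pow_succ]
    ring

theorem mul_potentialZ (hv : IsCriticalPointZ a v) :
    (a : K) * potentialZ a v = (Fintype.card ι - a) * ∏ k, v k := by
  have hsum : (a : K) * ∑ j, v j ^ a = Fintype.card ι * ∏ k, v k := by
    simp only [mul_sum, hv.mul_pow_eq_prod, sum_const, card_univ, nsmul_eq_mul]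
  rw [potentialZ]
  linear_combination hsum

theorem prod_eq_of_potentialZ_eq [CharZero K] (hv : IsCriticalPointZ a v)
    (hw : IsCriticalPointZ a w) (ha : a ≠ Fintype.card ι)
    (hZ : potentialZ a v = potentialZ a w) : ∏ k, v k = ∏ k, w k := by
  have hcard : (Fintype.card ι - a : K) ≠ 0 := sub_ne_zero.mpr (mod_cast ha.symm)
  apply mul_left_cancel₀ hcard
  rw [← hv.mul_potentialZ, ← hw.mul_potentialZ, hZ]

theorem pow_eq_of_prod_eq [CharZero K] (hv : IsCriticalPointZ a v)
    (hw : IsCriticalPointZ a w) (ha : a ≠ 0) (hprod : ∏ k, v k = ∏ k, w k) (j : ι) :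
    v j ^ a = w j ^ a :=
  mul_left_cancel₀ (Nat.cast_ne_zero.mpr ha) <| by
    rw [hv.mul_pow_eq_prod, hw.mul_pow_eq_prod, hprod]

theorem apply_ne_zero [CharZero K] (hv : IsCriticalPointZ a v) (ha : 2 ≤ a) (hv0 : v ≠ 0)
    (j : ι) : v j ≠ 0 := by
  intro hj
  refine hv0 (funext fun k => ?_)
  obtain rfl | hkj := eq_or_ne k j
  · exact hj
  have hzero : (a : K) * v k ^ (a - 1) = 0 := by
    rw [hv k]
    exact prod_eq_zero (mem_erase.mpr ⟨hkj.symm, mem_univ j⟩) hj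
  have ha0 : (a : K) ≠ 0 := Nat.cast_ne_zero.mpr (by omega)
  exact pow_eq_zero_iff (by omega) |>.mp ((mul_eq_zero.mp hzero).resolve_left ha0)

end IsCriticalPointZ

theorem group_acts_freely_transitively_on_small_critical_points_general
    (n a : ℕ) (ha : 2 ≤ a) (han : a ≤ n - 1)
    (v w : Fin n → ℂ) (hv0 : v ≠ 0)
    (hcv : ∀ j, (a : ℂ) * v j ^ (a - 1) = ∏ k ∈ Finset.univ.erase j, v k)
    (hcw : ∀ j, (a : ℂ) * w j ^ (a - 1) = ∏ k ∈ Finset.univ.erase j, w k)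
    (hZ : -∏ j, v j + ∑ j, v j ^ a = -∏ j, w j + ∑ j, w j ^ a) :
    ∃! ζ : Fin n → ℂ, (∀ j, ζ j ^ a = 1) ∧ (∏ j, ζ j = 1) ∧ ∀ j, w j = ζ j * v j := by
  have hv : ∀ j, v j ≠ 0 := IsCriticalPointZ.apply_ne_zero hcv ha hv0
  have hprod : ∏ k, v k = ∏ k, w k :=
    IsCriticalPointZ.prod_eq_of_potentialZ_eq hcv hcw (by rw [Fintype.card_fin]; omega) hZ
  have hpow : ∀ j, v j ^ a = w j ^ a :=
    IsCriticalPointZ.pow_eq_of_prod_eq hcv hcw (by omega) hprod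
  refine ⟨fun j => w j / v j, ⟨fun j => ?_, ?_, fun j => ?_⟩, fun ζ ⟨_, _, hζ⟩ => ?_⟩
  · rw [div_pow, ← hpow j, div_self (pow_ne_zero _ (hv j))]
  · rw [prod_div_distrib, ← hprod, div_self (prod_ne_zero_iff.mpr fun j _ => hv j)]
  · rw [div_mul_cancel₀ _ (hv j)]
  · funext j
    rw [eq_div_iff (hv j), hζ j]

/-- For `n ≥ 4`, `2 ≤ a ≤ n−1`, if `v, w ∈ ℂⁿ` are both nonzero critical
points of `Z^n_a` with the same critical value, then there is a unique `ζ ∈ ℂⁿ` with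
`ζ_j^a = 1` for all `j` and `∏_j ζ_j = 1` such that `w_j = ζ_j·v_j` for all `j`. -/
theorem group_acts_freely_transitively_on_small_critical_points
    (n a : ℕ) (hn : 4 ≤ n) (ha : 2 ≤ a) (han : a ≤ n - 1)
    (v w : Fin n → ℂ) (hv0 : v ≠ 0) (hw0 : w ≠ 0)
    (hcv : ∀ j, (a : ℂ) * v j ^ (a - 1) = ∏ k ∈ Finset.univ.erase j, v k)
    (hcw : ∀ j, (a : ℂ) * w j ^ (a - 1) = ∏ k ∈ Finset.univ.erase j, w k)
    (hZ : -∏ j, v j + ∑ j, v j ^ a = -∏ j, w j + ∑ j, w j ^ a) :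
    ∃! ζ : Fin n → ℂ, (∀ j, ζ j ^ a = 1) ∧ (∏ j, ζ j = 1) ∧ ∀ j, w j = ζ j * v j :=
  group_acts_freely_transitively_on_small_critical_points_general n a ha han v w hv0 hcv hcw hZ
end

section
/- Let n ≥ 4 and 2 ≤ a ≤ n−1 be integers. In the polynomial ring S = ℂ[r₁,…,rₙ,u₁,…,uₙ], the n elements g̃_j := a·r_j·u_j^{a−1} − ∏_{k≠j} u_k (for j = 1,…,n) form a regular sequence. -/
/-!
Order the monomials lexicographically with every `r`-variable before every `u`-variable. Then
the leading monomial of `g̃_j` is `r_j u_j^{a-1}`, and these leading monomials are pairwise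
coprime. Nonzero polynomials with pairwise coprime leading monomials form a Gröbner basis
(Buchberger's product criterion), and are a regular sequence as soon as no leading monomial is
constant: if `g * h` lies in the ideal of the earlier elements, replace `h` by its remainder `r`
under division by them; were `r ≠ 0`, the leading monomial of `g * r` would be divisible by that
of an earlier element, hence by coprimality so would the leading monomial of `r`, which is not
the case for a remainder.
-/

open MvPolynomial

/-- The element `g̃_j = a·r_j·u_j^{a−1} − ∏_{k≠j} u_k` of `S = ℂ[r₁,…,rₙ,u₁,…,uₙ]`,
where `r_j` is the variable `X (Sum.inl j)` and `u_j` is the variable `X (Sum.inr j)`.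
Up to sign, this is the partial derivative `∂Z̃^n_a/∂u_j` of
`Z̃^n_a = −u₁⋯uₙ + Σ_j r_j·u_j^a`. -/
noncomputable def gTilde (n a : ℕ) (j : Fin n) : MvPolynomial (Fin n ⊕ Fin n) ℂ :=
  (a : MvPolynomial (Fin n ⊕ Fin n) ℂ) * X (Sum.inl j) * X (Sum.inr j) ^ (a - 1)
    - ∏ k ∈ Finset.univ.erase j, X (Sum.inr k)

open scoped MonomialOrder

theorem Finsupp.le_of_le_add_of_disjoint {ι : Type*} {d e f : ι →₀ ℕ}
    (hef : Disjoint e.support f.support) (h : e ≤ d + f) : e ≤ d := by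
  intro x
  by_cases hx : x ∈ e.support
  · simpa [Finsupp.notMem_support_iff.mp (Finset.disjoint_left.mp hef hx)] using h x
  · simp [Finsupp.notMem_support_iff.mp hx]

namespace MonomialOrder

section Groebner

variable {σ K : Type*} [Field K] (m : MonomialOrder σ)

def IsGroebnerBasis (s : Set (MvPolynomial σ K)) : Prop :=
  ∀ f ∈ Ideal.span s, f ≠ 0 → ∃ g ∈ s, g ≠ 0 ∧ m.degree g ≤ m.degree f

variable {m} {s : Set (MvPolynomial σ K)}

theorem exists_sub_mem_span_forall_not_degree_le (hs : ∀ b ∈ s, b ≠ 0)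
    (f : MvPolynomial σ K) :
    ∃ r, f - r ∈ Ideal.span s ∧ ∀ c ∈ r.support, ∀ b ∈ s, ¬ m.degree b ≤ c := by
  obtain ⟨q, r, rfl, -, hr⟩ :=
    m.div_set (fun b hb => (m.leadingCoeff_ne_zero_iff.mpr (hs b hb)).isUnit) f
  refine ⟨r, ?_, hr⟩
  rw [add_sub_cancel_right]
  exact (Finsupp.mem_span_iff_linearCombination _ s _).mpr ⟨q, rfl⟩

theorem IsGroebnerBasis.degree_ne_add (hs : m.IsGroebnerBasis s) {d e : σ →₀ ℕ}
    (hd : ∀ b ∈ s, ¬ m.degree b ≤ d) (he : ∀ b ∈ s, Disjoint (m.degree b).support e.support)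
    {z : MvPolynomial σ K} (hz : z ∈ Ideal.span s) (hz0 : z ≠ 0) : m.degree z ≠ d + e := by
  intro hze
  obtain ⟨b, hb, -, hle⟩ := hs z hz hz0
  exact hd b hb (Finsupp.le_of_le_add_of_disjoint (he b hb) (hze ▸ hle))

theorem IsGroebnerBasis.mem_span_of_mul_mem (hs : m.IsGroebnerBasis s) (hs0 : ∀ b ∈ s, b ≠ 0)
    {g h : MvPolynomial σ K} (hg : g ≠ 0)
    (hgs : ∀ b ∈ s, Disjoint (m.degree b).support (m.degree g).support)
    (hgh : g * h ∈ Ideal.span s) : h ∈ Ideal.span s := by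
  obtain ⟨r, hhr, hr⟩ := exists_sub_mem_span_forall_not_degree_le (m := m) hs0 h
  obtain rfl | hr0 := eq_or_ne r 0
  · simpa using hhr
  have hrg : r * g ∈ Ideal.span s := by
    convert sub_mem hgh (Ideal.mul_mem_left _ g hhr) using 1
    ring
  exact (hs.degree_ne_add (hr _ (m.degree_mem_support hr0)) hgs hrg (mul_ne_zero hr0 hg)
    (m.degree_mul hr0 hg)).elim

theorem IsGroebnerBasis.insert (hs : m.IsGroebnerBasis s) (hs0 : ∀ b ∈ s, b ≠ 0)
    {g : MvPolynomial σ K} (hg : g ≠ 0)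
    (hgs : ∀ b ∈ s, Disjoint (m.degree b).support (m.degree g).support) :
    m.IsGroebnerBasis (insert g s) := by
  intro f hmem hf0
  obtain ⟨p, z, hz, rfl⟩ := Submodule.mem_span_insert.mp hmem
  obtain ⟨r, hpr, hr⟩ := exists_sub_mem_span_forall_not_degree_le (m := m) hs0 p
  have hz' : (p - r) * g + z ∈ Ideal.span s := add_mem (Ideal.mul_mem_right _ _ hpr) hz
  set z' := (p - r) * g + z
  have hf : p • g + z = r * g + z' := by simp only [z', smul_eq_mul]; ring
  rw [hf] at hf0 ⊢
  obtain rfl | hr0 := eq_or_ne r 0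
  · rw [zero_mul, zero_add] at hf0 ⊢
    obtain ⟨b, hb, hb0, hle⟩ := hs z' hz' hf0
    exact ⟨b, Set.mem_insert_of_mem _ hb, hb0, hle⟩
  have hrg := m.degree_mul hr0 hg
  by_cases hdeg : m.degree (r * g + z') = m.degree (r * g)
  · exact ⟨g, Set.mem_insert _ _, hg, hdeg ▸ hrg ▸ le_add_self⟩
  -- `z' ∈ span s` cannot have the leading monomial `deg r + deg g` of `r * g`: no cancellation
  have hz'0 : z' ≠ 0 := by
    intro hz0
    rw [hz0, add_zero] at hdeg
    exact hdeg rfl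
  have hne : m.degree (r * g) ≠ m.degree z' := fun h =>
    hs.degree_ne_add (hr _ (m.degree_mem_support hr0)) hgs hz' hz'0 (h.symm.trans hrg)
  have hfz : m.degree (r * g + z') = m.degree z' := by
    have hmax := m.degree_add_of_ne hne
    rcases max_choice (m.toSyn (m.degree (r * g))) (m.toSyn (m.degree z')) with h | h
    · exact absurd (m.toSyn.injective (hmax.trans h)) hdeg
    · exact m.toSyn.injective (hmax.trans h)
  obtain ⟨b, hb, hb0, hle⟩ := hs z' hz' hz'0
  exact ⟨b, Set.mem_insert_of_mem _ hb, hb0, hfz ▸ hle⟩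

theorem isGroebnerBasis_of_pairwise_disjoint (l : List (MvPolynomial σ K))
    (hl0 : ∀ g ∈ l, g ≠ 0)
    (hl : l.Pairwise fun f g => Disjoint (m.degree f).support (m.degree g).support) :
    m.IsGroebnerBasis {g | g ∈ l} := by
  induction l with
  | nil =>
    intro f hf hf0
    simp_all
  | cons g l ih =>
    rw [List.pairwise_cons] at hl
    rw [List.forall_mem_cons] at hl0
    have hset : {x | x ∈ g :: l} = insert g {x | x ∈ l} := by ext; simp
    rw [hset]
    exact (ih hl0.2 hl.2).insert hl0.2 hl0.1 fun b hb => (hl.1 b hb).symm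

theorem isRegular_of_pairwise_disjoint (l : List (MvPolynomial σ K))
    (hl0 : ∀ g ∈ l, m.degree g ≠ 0)
    (hl : l.Pairwise fun f g => Disjoint (m.degree f).support (m.degree g).support) :
    RingTheory.Sequence.IsRegular (MvPolynomial σ K) l := by
  have hne : ∀ g ∈ l, g ≠ 0 := fun g hg => m.ne_zero_of_degree_ne_zero (hl0 g hg)
  refine ⟨⟨fun i hi => ?_⟩, fun htop => ?_⟩
  · rw [Ideal.smul_eq_mul, Ideal.mul_top, isSMulRegular_quotient_iff_mem_of_smul_mem]
    intro h hh
    have htake : ∀ b ∈ l.take i, b ≠ 0 := fun b hb => hne b (List.mem_of_mem_take hb)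
    refine (isGroebnerBasis_of_pairwise_disjoint _ htake (hl.sublist (l.take_sublist i))
      ).mem_span_of_mul_mem htake (hne _ (List.getElem_mem hi)) (fun b hb => ?_) hh
    obtain ⟨k, hk, rfl⟩ := List.mem_take_iff_getElem.mp hb
    exact List.pairwise_iff_getElem.mp hl k i _ hi (lt_of_lt_of_le hk (min_le_left _ _))
  · rw [Ideal.smul_eq_mul, Ideal.mul_top] at htop
    obtain ⟨g, hg, -, hle⟩ := isGroebnerBasis_of_pairwise_disjoint l hne hl 1
      (show 1 ∈ Ideal.ofList l by rw [← htop]; exact Submodule.mem_top) one_ne_zero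
    exact hl0 g hg (by simpa [m.degree_one] using hle)

end Groebner

noncomputable def sumLex (α β : Type*) [LinearOrder α] [Fintype α] [LinearOrder β] [Fintype β] :
    MonomialOrder (α ⊕ β) where
  syn := Lex ((α ⊕ₗ β) →₀ ℕ)
  toSyn := (Finsupp.domCongr toLex).trans MonomialOrder.lex.toSyn
  toSyn_monotone _ _ h := Finsupp.toLex_monotone fun i => h (ofLex i)

theorem sumLex_lt_iff {α β : Type*} [LinearOrder α] [Fintype α] [LinearOrder β] [Fintype β]
    {d e : α ⊕ β →₀ ℕ} :
    d ≺[sumLex α β] e ↔ toLex (Finsupp.domCongr toLex d) < toLex (Finsupp.domCongr toLex e) :=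
  Iff.rfl

end MonomialOrder

section gTilde

open MonomialOrder Finsupp

variable {n a : ℕ}

theorem gTilde_eq_monomial_sub_monomial (j : Fin n) :
    gTilde n a j = monomial (single (Sum.inl j) 1 + single (Sum.inr j) (a - 1)) (a : ℂ)
      - monomial (∑ k ∈ Finset.univ.erase j, single (Sum.inr k) 1) 1 := by
  rw [gTilde, monomial_sum_one, ← map_natCast C, X_pow_eq_monomial, C_apply, X, monomial_mul,
    monomial_mul]
  simp [X]

theorem sum_single_inr_lt_sumLex (j : Fin n) :
    (∑ k ∈ Finset.univ.erase j, single (Sum.inr k) 1) ≺[sumLex (Fin n) (Fin n)]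
      single (Sum.inl j) 1 + single (Sum.inr j) (a - 1) := by
  rw [sumLex_lt_iff, Finsupp.Lex.lt_iff]
  refine ⟨toLex (Sum.inl j), fun i hi => ?_, by simp⟩
  obtain ⟨k | k, rfl⟩ := toLex.surjective i
  · have hkj : k ≠ j := ne_of_lt (by simpa using hi)
    simp [hkj]
  · exact absurd hi Sum.Lex.not_inr_lt_inl

theorem degree_gTilde (ha : a ≠ 0) (j : Fin n) :
    (sumLex (Fin n) (Fin n)).degree (gTilde n a j)
      = single (Sum.inl j) 1 + single (Sum.inr j) (a - 1) := by
  have ha' : (a : ℂ) ≠ 0 := Nat.cast_ne_zero.mpr ha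
  rw [gTilde_eq_monomial_sub_monomial, degree_sub_of_lt, degree_monomial, if_neg ha']
  rw [degree_monomial, degree_monomial, if_neg ha', if_neg one_ne_zero]
  exact sum_single_inr_lt_sumLex j

theorem disjoint_support_single_inl_add_single_inr {j k : Fin n} (hjk : j ≠ k) :
    Disjoint (single (Sum.inl j) 1 + single (Sum.inr j) (a - 1)).support
      (single (Sum.inl k) 1 + single (Sum.inr k) (a - 1) : Fin n ⊕ Fin n →₀ ℕ).support := by
  rw [Finset.disjoint_left]
  rintro (x | x) hj hk <;> simp [single_apply] at hj hk <;> grind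

end gTilde

theorem gTilde_isRegular_sequence_general (n a : ℕ) (ha : 2 ≤ a) :
    RingTheory.Sequence.IsRegular (MvPolynomial (Fin n ⊕ Fin n) ℂ)
      (List.ofFn (gTilde n a)) := by
  have ha0 : a ≠ 0 := by omega
  refine (MonomialOrder.sumLex (Fin n) (Fin n)).isRegular_of_pairwise_disjoint _ ?_ ?_
  · simp only [List.forall_mem_ofFn_iff, degree_gTilde ha0, ne_eq, Finsupp.ext_iff, not_forall]
    exact fun j => ⟨Sum.inl j, by simp⟩
  · rw [List.pairwise_ofFn]
    intro j k hjk
    rw [degree_gTilde ha0, degree_gTilde ha0]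
    exact disjoint_support_single_inl_add_single_inr hjk.ne

/-- For `n ≥ 4` and `2 ≤ a ≤ n−1`, the `n` elements
`g̃_j = a·r_j·u_j^{a−1} − ∏_{k≠j} u_k` form a regular sequence in
`S = ℂ[r₁,…,rₙ,u₁,…,uₙ]`. -/
theorem gTilde_isRegular_sequence (n a : ℕ) (hn : 4 ≤ n) (ha : 2 ≤ a) (han : a ≤ n - 1) :
    RingTheory.Sequence.IsRegular (MvPolynomial (Fin n ⊕ Fin n) ℂ)
      (List.ofFn (gTilde n a)) :=
  gTilde_isRegular_sequence_general n a ha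
end

section
/- Let n ≥ 4 and 2 ≤ a ≤ n−1 be integers. Let S = ℂ[r₁,…,rₙ,u₁,…,uₙ] and let J̃ be the ideal generated by g̃_j := a·r_j·u_j^{a−1} − ∏_{k≠j} u_k for j = 1,…,n. If p₀, p₁, …, p_{n−2} are polynomials in ℂ[r₁,…,rₙ] such that Σ_{i=0}^{n−2} p_i·(r₁·u₁^a)^i lies in J̃, then p_i = 0 for every i. -/
open MvPolynomial

/-!
Send a polynomial to the sum of its coefficients weighted by a function `w` of the exponents.
This functional kills the ideal generated by binomials `α x^s - β x^t` as soon as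
`α w(e + s) = β w(e + t)` for every exponent `e`. For `J̃` we take `w` to be `a^{-(r-degree)}`
times the indicator of a set of exponents cut out by invariants of the moves `s_j ↔ t_j` and by a
bound on the `r`-degree. The set is chosen so that among the exponents `r^m (r₁u₁^a)^i` it contains
`r^{m₀} (r₁u₁^a)^{i₀}` and otherwise only those with `i = i₀ + (n - a) d`, `m = m₀ - d` for some
`d > 0`. Applied to `∑ p_i β^i ∈ J̃`, this gives `coeff m₀ p_{i₀} = 0` once the `p_i` with
`i > i₀` are known to vanish, and descending induction on `i₀` finishes the proof.
-/

namespace MvPolynomial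

variable {σ τ R : Type*}

section CommSemiring

variable [CommSemiring R]

noncomputable def weightedCoeffSum : ((σ →₀ ℕ) → R) ≃ₗ[R] (MvPolynomial σ R →ₗ[R] R) :=
  (basisMonomials σ R).constr R

@[simp]
theorem weightedCoeffSum_monomial (w : (σ →₀ ℕ) → R) (s : σ →₀ ℕ) (c : R) :
    weightedCoeffSum w (monomial s c) = c * w s := by
  have : monomial s c = c • basisMonomials σ R s := by simp [smul_monomial]
  rw [this, map_smul, weightedCoeffSum, Module.Basis.constr_basis, smul_eq_mul]

theorem weightedCoeffSum_pi_single [DecidableEq σ] (s : σ →₀ ℕ) (c : R) (q : MvPolynomial σ R) :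
    weightedCoeffSum (Pi.single s c) q = coeff s q * c := by
  induction q using induction_on' with
  | monomial u c' => simp [coeff_monomial, Pi.single_apply, eq_comm]
  | add q₁ q₂ h₁ h₂ => simp [h₁, h₂, add_mul]

theorem weightedCoeffSum_mul_monomial (w : (σ →₀ ℕ) → R) (q : MvPolynomial σ R)
    (u : σ →₀ ℕ) (c : R) :
    weightedCoeffSum w (q * monomial u c) = c * weightedCoeffSum (fun e => w (e + u)) q := by
  induction q using induction_on' with
  | monomial s c' => simp only [monomial_mul, weightedCoeffSum_monomial]; ring
  | add q₁ q₂ h₁ h₂ => simp [add_mul, h₁, h₂, mul_add]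

theorem weightedCoeffSum_rename (w : (τ →₀ ℕ) → R) (f : σ → τ) (q : MvPolynomial σ R) :
    weightedCoeffSum w (rename f q) = weightedCoeffSum (fun e => w (e.mapDomain f)) q := by
  induction q using induction_on' with
  | monomial s c => simp [rename_monomial]
  | add q₁ q₂ h₁ h₂ => simp [h₁, h₂]

end CommSemiring

theorem weightedCoeffSum_eq_zero_of_mem_span_binomials [CommRing R] {ι : Type*}
    (w : (σ →₀ ℕ) → R) (s t : ι → σ →₀ ℕ) (α β : ι → R)
    (hw : ∀ e j, α j * w (e + s j) = β j * w (e + t j)) {x : MvPolynomial σ R}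
    (hx : x ∈ Ideal.span (Set.range fun j => monomial (s j) (α j) - monomial (t j) (β j))) :
    weightedCoeffSum w x = 0 := by
  suffices ∀ q, weightedCoeffSum w (q * x) = 0 by simpa using this 1
  induction hx using Submodule.span_induction with
  | mem _ hg =>
    obtain ⟨j, rfl⟩ := hg
    intro q
    have hzero : (α j • fun e => w (e + s j)) - β j • (fun e => w (e + t j)) = 0 := by
      ext e; simp [hw]
    rw [mul_sub, map_sub, weightedCoeffSum_mul_monomial, weightedCoeffSum_mul_monomial]
    simpa using congr_arg (fun v => weightedCoeffSum v q) hzero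
  | zero => simp
  | add x y _ _ hx hy => intro q; rw [mul_add, map_add, hx, hy, add_zero]
  | smul c x _ hx => intro q; rw [smul_eq_mul, ← mul_assoc, hx]

end MvPolynomial

namespace JacobianRing

variable {n a : ℕ}

noncomputable def gTildeExpLeft (n a : ℕ) (j : Fin n) : Fin n ⊕ Fin n →₀ ℕ :=
  Finsupp.single (Sum.inl j) 1 + Finsupp.single (Sum.inr j) (a - 1)

noncomputable def gTildeExpRight (n : ℕ) (j : Fin n) : Fin n ⊕ Fin n →₀ ℕ :=
  ∑ k ∈ Finset.univ.erase j, Finsupp.single (Sum.inr k) 1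

theorem gTilde_eq (n a : ℕ) (j : Fin n) :
    gTilde n a j = monomial (gTildeExpLeft n a j) (a : ℂ) - monomial (gTildeExpRight n j) 1 := by
  rw [gTilde, gTildeExpLeft, gTildeExpRight, monomial_sum_one, ← mul_one (a : ℂ), ← monomial_mul,
    ← X_pow_eq_monomial, ← C_mul_X_eq_monomial, map_natCast]
  rfl

@[simp] theorem gTildeExpLeft_inl (j k : Fin n) :
    gTildeExpLeft n a j (Sum.inl k) = if j = k then 1 else 0 := by
  simp [gTildeExpLeft, Finsupp.single_apply]

@[simp] theorem gTildeExpLeft_inr (j k : Fin n) :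
    gTildeExpLeft n a j (Sum.inr k) = if j = k then a - 1 else 0 := by
  simp only [gTildeExpLeft, Finsupp.add_apply, Finsupp.single_apply, Sum.inr.injEq,
    reduceCtorEq, if_false, zero_add]

@[simp] theorem gTildeExpRight_inl (j k : Fin n) : gTildeExpRight n j (Sum.inl k) = 0 := by
  simp [gTildeExpRight, Finsupp.finsetSum_apply]

@[simp] theorem gTildeExpRight_inr (j k : Fin n) :
    gTildeExpRight n j (Sum.inr k) = if j = k then 0 else 1 := by
  rcases eq_or_ne j k with rfl | h
  · simp [gTildeExpRight, Finsupp.finsetSum_apply, Finsupp.single_apply]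
  · simp [gTildeExpRight, Finsupp.finsetSum_apply, Finsupp.single_apply, h, h.symm]


def rDegree (e : Fin n ⊕ Fin n →₀ ℕ) : ℕ := ∑ k, e (Sum.inl k)

@[simp] theorem rDegree_add (e e' : Fin n ⊕ Fin n →₀ ℕ) :
    rDegree (e + e') = rDegree e + rDegree e' := by
  simp [rDegree, Finset.sum_add_distrib]

@[simp] theorem rDegree_gTildeExpLeft (j : Fin n) : rDegree (gTildeExpLeft n a j) = 1 := by
  simp [rDegree]

@[simp] theorem rDegree_gTildeExpRight (j : Fin n) : rDegree (gTildeExpRight n j) = 0 := by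
  simp [rDegree]

/-- Writing `ρ` for the `r`-degree and `f = |m₀| + i₀`, the quantities `u_k + ρ - a r_k` are
invariant under the moves `e + gTildeExpLeft j ↔ e + gTildeExpRight j`; the cut-off `ρ ≤ f`
survives them because an exponent `e + gTildeExpRight j` of `r`-degree `f` in the set would have
`a ∣ u_k ≥ 1` for all `k ≠ j`, hence `(n - 1) a ≤ ∑ u_k = a i₀`. -/
def saturatedSet (n a i₀ : ℕ) (m₀ : Fin n →₀ ℕ) : Set (Fin n ⊕ Fin n →₀ ℕ) :=
  {e | rDegree e ≤ ∑ k, m₀ k + i₀ ∧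
    ∀ k, e (Sum.inr k) + rDegree e + a * m₀ k = a * e (Sum.inl k) + (∑ k, m₀ k + i₀)}

variable {i₀ : ℕ} {m₀ : Fin n →₀ ℕ} {e : Fin n ⊕ Fin n →₀ ℕ}

theorem sum_inr_of_mem_saturatedSet (he : e ∈ saturatedSet n a i₀ m₀)
    (hρ : rDegree e = ∑ k, m₀ k + i₀) : ∑ k, e (Sum.inr k) = a * i₀ := by
  have h := Finset.sum_congr rfl fun k (_ : k ∈ Finset.univ) => he.2 k
  simp only [Finset.sum_add_distrib, ← Finset.mul_sum, Finset.sum_const, Finset.card_univ,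
    Fintype.card_fin, smul_eq_mul, hρ] at h
  rw [← rDegree, hρ] at h
  linarith [mul_add a (∑ k, m₀ k) i₀]

theorem dvd_inr_of_mem_saturatedSet (he : e ∈ saturatedSet n a i₀ m₀)
    (hρ : rDegree e = ∑ k, m₀ k + i₀) (k : Fin n) : a ∣ e (Sum.inr k) := by
  have h := he.2 k
  rw [hρ] at h
  exact (Nat.dvd_add_right (dvd_mul_right a (m₀ k))).mp ⟨e (Sum.inl k), by omega⟩

theorem rDegree_lt_of_add_gTildeExpRight_mem (ha : 1 ≤ a) (hi₀ : i₀ + 2 ≤ n) (j : Fin n)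
    (he : e + gTildeExpRight n j ∈ saturatedSet n a i₀ m₀) : rDegree e < ∑ k, m₀ k + i₀ := by
  by_contra hge
  have hρ : rDegree (e + gTildeExpRight n j) = ∑ k, m₀ k + i₀ := by
    have := he.1
    simp only [rDegree_add, rDegree_gTildeExpRight, add_zero] at this ⊢
    omega
  have hle : ∀ k ∈ Finset.univ.erase j, a ≤ (e + gTildeExpRight n j) (Sum.inr k) := fun k hk =>
    Nat.le_of_dvd (by simp [(Finset.ne_of_mem_erase hk).symm])
      (dvd_inr_of_mem_saturatedSet he hρ k)
  have hsum := (Finset.card_nsmul_le_sum _ _ _ hle).trans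
    (Finset.sum_le_sum_of_subset (Finset.subset_univ _))
  rw [sum_inr_of_mem_saturatedSet he hρ, Finset.card_erase_of_mem (Finset.mem_univ j),
    Finset.card_univ, Fintype.card_fin, smul_eq_mul, mul_comm] at hsum
  have := Nat.le_of_mul_le_mul_left hsum ha
  omega

theorem add_gTildeExpLeft_mem_iff (ha : 1 ≤ a) (hi₀ : i₀ + 2 ≤ n) (e : Fin n ⊕ Fin n →₀ ℕ)
    (j : Fin n) :
    e + gTildeExpLeft n a j ∈ saturatedSet n a i₀ m₀ ↔
      e + gTildeExpRight n j ∈ saturatedSet n a i₀ m₀ := by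
  have hcond : ∀ k, (e + gTildeExpLeft n a j) (Sum.inr k) + rDegree (e + gTildeExpLeft n a j) +
      a * m₀ k = a * (e + gTildeExpLeft n a j) (Sum.inl k) + (∑ k, m₀ k + i₀) ↔
      (e + gTildeExpRight n j) (Sum.inr k) + rDegree (e + gTildeExpRight n j) +
      a * m₀ k = a * (e + gTildeExpRight n j) (Sum.inl k) + (∑ k, m₀ k + i₀) := by
    intro k
    simp only [Finsupp.add_apply, rDegree_add, gTildeExpLeft_inl, gTildeExpLeft_inr,
      gTildeExpRight_inl, gTildeExpRight_inr, rDegree_gTildeExpLeft, rDegree_gTildeExpRight,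
      add_zero]
    split_ifs
    · rw [mul_add]; omega
    · simp only [Nat.add_zero] at *; omega
  constructor
  · rintro ⟨hρ, h⟩
    refine ⟨?_, fun k => (hcond k).1 (h k)⟩
    simp only [rDegree_add, rDegree_gTildeExpLeft, rDegree_gTildeExpRight] at hρ ⊢
    omega
  · intro he
    refine ⟨?_, fun k => (hcond k).2 (he.2 k)⟩
    have := rDegree_lt_of_add_gTildeExpRight_mem ha hi₀ j he
    simp only [rDegree_add, rDegree_gTildeExpLeft]
    omega

noncomputable def betaExp (n a : ℕ) (j₀ : Fin n) : Fin n ⊕ Fin n →₀ ℕ :=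
  Finsupp.single (Sum.inl j₀) 1 + Finsupp.single (Sum.inr j₀) a

variable {j₀ : Fin n} {m : Fin n →₀ ℕ} {i : ℕ}

@[simp] theorem mapDomain_add_betaExp_inl (k : Fin n) :
    (m.mapDomain Sum.inl + i • betaExp n a j₀ : Fin n ⊕ Fin n →₀ ℕ) (Sum.inl k) =
      m k + if j₀ = k then i else 0 := by
  simp [betaExp, Finsupp.mapDomain_apply Sum.inl_injective, Finsupp.single_apply]

@[simp] theorem mapDomain_add_betaExp_inr (k : Fin n) :
    (m.mapDomain Sum.inl + i • betaExp n a j₀ : Fin n ⊕ Fin n →₀ ℕ) (Sum.inr k) =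
      if j₀ = k then i * a else 0 := by
  rcases eq_or_ne j₀ k with rfl | h
  · simp [betaExp, Finsupp.mapDomain_of_notMem_range]
  · simp [betaExp, Finsupp.mapDomain_of_notMem_range, h]

@[simp] theorem rDegree_mapDomain_add_betaExp :
    rDegree (m.mapDomain Sum.inl + i • betaExp n a j₀) = ∑ k, m k + i := by
  simp [rDegree, Finset.sum_add_distrib]

theorem mapDomain_add_betaExp_mem_saturatedSet_iff (ha : 1 ≤ a) (han : a ≤ n) :
    m.mapDomain Sum.inl + i • betaExp n a j₀ ∈ saturatedSet n a i₀ m₀ ↔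
      ∃ d, (∀ k, m₀ k = m k + d) ∧ i = i₀ + (n - a) * d := by
  have hcond : ∀ k, (if j₀ = k then i * a else 0) + (∑ k, m k + i) + a * m₀ k =
      a * (m k + if j₀ = k then i else 0) + (∑ k, m₀ k + i₀) ↔
      ∑ k, m k + i + a * m₀ k = a * m k + (∑ k, m₀ k + i₀) := by
    intro k
    split_ifs
    · rw [mul_add, mul_comm a i]; omega
    · rw [add_zero, zero_add]
  have hsum : ∀ d, (∀ k, m₀ k = m k + d) → ∑ k, m₀ k = ∑ k, m k + n * d := fun d hm => by
    simp [hm, Finset.sum_add_distrib]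
  have hnd : ∀ d, a * d ≤ n * d := fun d => Nat.mul_le_mul_right d han
  simp only [saturatedSet, Set.mem_ofPred_eq, rDegree_mapDomain_add_betaExp,
    mapDomain_add_betaExp_inl, mapDomain_add_betaExp_inr, hcond]
  constructor
  · rintro ⟨hρ, h⟩
    have hle : ∀ k, m k ≤ m₀ k := fun k =>
      Nat.le_of_mul_le_mul_left (by have := h k; omega) ha
    obtain ⟨d, hm⟩ : ∃ d, ∀ k, m₀ k = m k + d := by
      refine ⟨m₀ j₀ - m j₀, fun k => Nat.eq_of_mul_eq_mul_left ha ?_⟩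
      have hk := h k
      have h₀ := h j₀
      have := Nat.mul_le_mul_left a (hle k)
      have := Nat.mul_le_mul_left a (hle j₀)
      rw [mul_add, Nat.mul_sub]
      omega
    refine ⟨d, hm, ?_⟩
    have h₀ := h j₀
    have := hsum d hm
    have := hnd d
    have : a * m₀ j₀ = a * m j₀ + a * d := by rw [hm j₀, mul_add]
    rw [Nat.sub_mul]
    omega
  · rintro ⟨d, hm, rfl⟩
    have := hsum d hm
    have := hnd d
    refine ⟨by rw [Nat.sub_mul]; omega, fun k => ?_⟩
    rw [hm k, mul_add, Nat.sub_mul]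
    omega

/-- The factor `a⁻¹ ^ ρ` absorbs the coefficient `a` of the first monomial of `g̃_j`. -/
noncomputable def witnessWeight (n a i₀ : ℕ) (m₀ : Fin n →₀ ℕ) :
    (Fin n ⊕ Fin n →₀ ℕ) → ℂ :=
  (saturatedSet n a i₀ m₀).indicator fun e => (a : ℂ)⁻¹ ^ rDegree e

theorem witnessWeight_add_gTildeExp (ha : 1 ≤ a) (hi₀ : i₀ + 2 ≤ n)
    (e : Fin n ⊕ Fin n →₀ ℕ) (j : Fin n) :
    (a : ℂ) * witnessWeight n a i₀ m₀ (e + gTildeExpLeft n a j) =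
      1 * witnessWeight n a i₀ m₀ (e + gTildeExpRight n j) := by
  classical
  have ha' : (a : ℂ) ≠ 0 := by norm_cast; omega
  simp only [witnessWeight, Set.indicator_apply, add_gTildeExpLeft_mem_iff ha hi₀, rDegree_add,
    rDegree_gTildeExpLeft, rDegree_gTildeExpRight, add_zero, one_mul]
  split_ifs
  · rw [pow_succ, ← mul_assoc, mul_comm, ← mul_assoc, inv_mul_cancel₀ ha', one_mul]
  · rw [mul_zero]

theorem witnessWeight_mapDomain_add_betaExp_of_lt (ha : 1 ≤ a) (han : a ≤ n) (hi : i < i₀) :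
    (fun m : Fin n →₀ ℕ => witnessWeight n a i₀ m₀ (m.mapDomain Sum.inl + i • betaExp n a j₀)) =
      0 := by
  ext m
  refine Set.indicator_of_notMem ?_ _
  rw [mapDomain_add_betaExp_mem_saturatedSet_iff ha han]
  rintro ⟨d, -, rfl⟩
  omega

theorem witnessWeight_mapDomain_add_betaExp_self (ha : 1 ≤ a) (han : a < n) :
    (fun m : Fin n →₀ ℕ => witnessWeight n a i₀ m₀ (m.mapDomain Sum.inl + i₀ • betaExp n a j₀)) =
      Pi.single m₀ ((a : ℂ)⁻¹ ^ (∑ k, m₀ k + i₀)) := by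
  classical
  ext m
  rw [witnessWeight, Set.indicator_apply, mapDomain_add_betaExp_mem_saturatedSet_iff ha han.le]
  rcases eq_or_ne m m₀ with rfl | hm
  · rw [if_pos ⟨0, by simp, by simp⟩, rDegree_mapDomain_add_betaExp, Pi.single_eq_same]
  · rw [if_neg, Pi.single_eq_of_ne hm]
    rintro ⟨d, hd, hi⟩
    obtain rfl : d = 0 := (mul_eq_zero.mp (by omega : (n - a) * d = 0)).resolve_left (by omega)
    exact hm (Finsupp.ext fun k => (hd k).symm)

theorem X_mul_X_pow_pow_eq_monomial (j₀ : Fin n) (i : ℕ) :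
    (X (Sum.inl j₀) * X (Sum.inr j₀) ^ a : MvPolynomial (Fin n ⊕ Fin n) ℂ) ^ i =
      monomial (i • betaExp n a j₀) 1 := by
  rw [X_pow_eq_monomial, X, monomial_mul, monomial_pow, one_mul, one_pow, betaExp]

end JacobianRing

open JacobianRing in
/-- For `n ≥ 4` and `2 ≤ a ≤ n−1`: if `p₀,…,p_{n−2} ∈ ℂ[r₁,…,rₙ]` are such
that `Σ_{i=0}^{n−2} p_i·(r₁·u₁^a)^i` lies in the ideal `J̃ = (g̃₁,…,g̃ₙ)` of
`S = ℂ[r₁,…,rₙ,u₁,…,uₙ]`, then all `p_i = 0`. Here `ℂ[r₁,…,rₙ]` is embedded into `S`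
by renaming the variables along `Sum.inl`. -/
theorem no_linear_relations_in_jacobian_ring (n a : ℕ) (ha : 2 ≤ a)
    (han : a ≤ n - 1) (p : Fin (n - 1) → MvPolynomial (Fin n) ℂ)
    (hmem : (∑ i, rename Sum.inl (p i) *
        (X (Sum.inl (⟨0, by omega⟩ : Fin n)) *
          X (Sum.inr (⟨0, by omega⟩ : Fin n)) ^ a) ^ (i : ℕ))
      ∈ Ideal.span (Set.range (gTilde n a))) :
    ∀ i, p i = 0 := by
  intro i
  induction i using WellFoundedGT.induction with
  | _ i ih =>
  ext m₀
  rw [funext (gTilde_eq n a)] at hmem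
  have hzero := weightedCoeffSum_eq_zero_of_mem_span_binomials _ _ _ _ _
    (witnessWeight_add_gTildeExp (m₀ := m₀) (by omega) (by omega : (i : ℕ) + 2 ≤ n)) hmem
  simp only [map_sum, X_mul_X_pow_pow_eq_monomial, weightedCoeffSum_mul_monomial,
    weightedCoeffSum_rename, one_mul] at hzero
  rw [Finset.sum_eq_single i (fun i' _ hi' => ?_) (by simp),
    witnessWeight_mapDomain_add_betaExp_self (by omega) (by omega),
    weightedCoeffSum_pi_single] at hzero
  · simpa [show (a : ℂ) ≠ 0 by norm_cast; omega] using hzero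
  · rcases lt_or_gt_of_ne hi' with hlt | hgt
    · rw [witnessWeight_mapDomain_add_betaExp_of_lt (by omega) (by omega) hlt, map_zero,
        LinearMap.zero_apply]
    · rw [ih i' hgt, map_zero]
end

section
/- Let n ≥ 4 and 2 ≤ a ≤ n−1 be integers. In the formal power series ring P = ℂ⟦u₁,…,uₙ⟧, the n elements g_j := a·u_j^{a−1} − ∏_{k≠j} u_k (for j = 1,…,n) form a regular sequence. -/
/-!
Write `g_j = c X_j^q - r_j` with `c = a`, `q = a - 1` and `r_j = ∏_{k ≠ j} X_k` of order
`n - 1 > q`. The initial forms `c X_j^q` are pure powers of distinct variables, whose syzygies are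
the Koszul ones; lifting these shows that an element of `I_T = (g_i)_{i ∈ T}` of order `≥ q + N`
is a combination of the `g_i` with coefficients of order `≥ N`. If `g_j f ∈ I_T` with `j ∉ T`,
comparing lowest-degree parts then puts the lowest part of `f` in `(X_i^q)_{i ∈ T}`, so `f` is
congruent modulo `I_T` to a series of higher order. Hence `f ∈ I_T + 𝔪^N` for every `N`, and
`f ∈ I_T` by Krull's intersection theorem.
-/

/-- The element `g_j = a·u_j^{a−1} − ∏_{k≠j} u_k` of the formal power series ring
`P = ℂ⟦u₁,…,uₙ⟧`, where `u_j` is `MvPowerSeries.X j`. Up to sign, this is the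
partial derivative `∂Z^n_a/∂u_j` of `Z^n_a = −u₁⋯uₙ + Σ_j u_j^a`. -/
noncomputable def gPow (n a : ℕ) (j : Fin n) : MvPowerSeries (Fin n) ℂ :=
  (a : MvPowerSeries (Fin n) ℂ) * MvPowerSeries.X j ^ (a - 1)
    - ∏ k ∈ Finset.univ.erase j, MvPowerSeries.X k

open MvPowerSeries Finset

theorem Ideal.ofList_take_ofFn {R : Type*} [CommSemiring R] {n : ℕ} (g : Fin n → R) (i : ℕ) :
    Ideal.ofList ((List.ofFn g).take i)
      = Ideal.span (g '' ↑(Finset.univ.filter fun k : Fin n => (k : ℕ) < i)) := by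
  rw [Ideal.ofList]
  congr 1
  ext x
  simp only [Set.mem_ofPred_eq, List.mem_take_iff_getElem, List.getElem_ofFn, List.length_ofFn,
    Finset.coe_filter, Finset.mem_univ, true_and, Set.mem_image]
  constructor
  · rintro ⟨k, hk, rfl⟩
    exact ⟨⟨k, by omega⟩, by simp only; omega, rfl⟩
  · rintro ⟨k, hk, rfl⟩
    exact ⟨k, by omega, rfl⟩

namespace MvPowerSeries

section Order

variable {σ R : Type*} [CommRing R]

theorem order_le_order_of_coeff_eq_zero {f g : MvPowerSeries σ R}
    (h : ∀ d, coeff d f = 0 → coeff d g = 0) : f.order ≤ g.order :=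
  le_order fun _ hd => h _ (coeff_of_lt_order hd)

theorem le_order_sum {ι : Type*} {s : Finset ι} {f : ι → MvPowerSeries σ R} {n : ℕ∞}
    (h : ∀ i ∈ s, n ≤ (f i).order) : n ≤ (∑ i ∈ s, f i).order :=
  le_order fun d hd => by
    rw [map_sum]
    exact Finset.sum_eq_zero fun i hi => coeff_of_lt_order (hd.trans_le (h i hi))

theorem min_order_le_sub {f g : MvPowerSeries σ R} : min f.order g.order ≤ (f - g).order := by
  rw [sub_eq_add_neg, ← order_neg g]
  exact min_order_le_add

theorem le_order_add {f g : MvPowerSeries σ R} {n : ℕ∞} (hf : n ≤ f.order) (hg : n ≤ g.order) :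
    n ≤ (f + g).order :=
  (le_min hf hg).trans min_order_le_add

theorem le_order_sub {f g : MvPowerSeries σ R} {n : ℕ∞} (hf : n ≤ f.order) (hg : n ≤ g.order) :
    n ≤ (f - g).order :=
  (le_min hf hg).trans min_order_le_sub

theorem le_order_homogeneousComponent (t : ℕ) (f : MvPowerSeries σ R) :
    t ≤ (homogeneousComponent t f).order :=
  le_order fun d hd => by
    rw [coeff_homogeneousComponent, if_neg (by exact_mod_cast hd.ne)]

theorem le_order_sub_homogeneousComponent {t : ℕ} {f : MvPowerSeries σ R} (hf : t ≤ f.order) :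
    ↑(t + 1) ≤ (f - homogeneousComponent t f).order :=
  le_order fun d hd => by
    rw [map_sub, coeff_homogeneousComponent]
    split_ifs with hdt
    · exact sub_self _
    · rw [sub_zero]
      have hdt' : d.degree < t := by
        have : d.degree < t + 1 := by exact_mod_cast hd
        omega
      exact coeff_of_lt_order (lt_of_lt_of_le (by exact_mod_cast hdt') hf)

theorem le_order_mul_of_le_add {q t : ℕ} {f g : MvPowerSeries σ R} (hf : ↑(q + 1) ≤ f.order)
    (hg : ↑t ≤ ↑q + g.order) : ↑(t + 1) ≤ (f * g).order :=
  calc (↑(t + 1) : ℕ∞) ≤ ↑(q + 1) + g.order := by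
        push_cast
        rw [add_right_comm]
        gcongr
    _ ≤ f.order + g.order := by gcongr
    _ ≤ (f * g).order := le_order_mul

end Order

section Monomial

variable {σ R : Type*} [CommRing R] [IsDomain R]

theorem order_X_pow (i : σ) (q : ℕ) : (X i ^ q : MvPowerSeries σ R).order = q := by
  rw [X_pow_eq, order_monomial_of_ne_zero one_ne_zero, Finsupp.degree_single]

theorem order_X (i : σ) : (X i : MvPowerSeries σ R).order = 1 := by
  simpa using order_X_pow (R := R) i 1

theorem exists_eq_sum_X_pow_mul (q : ℕ) (T : Finset σ) (F : MvPowerSeries σ R)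
    (hF : ∀ d, coeff d F ≠ 0 → ∃ i ∈ T, q ≤ d i) :
    ∃ p : σ → MvPowerSeries σ R,
      F = ∑ i ∈ T, X i ^ q * p i ∧ ∀ i, F.order ≤ q + (p i).order := by
  classical
  induction T using Finset.induction_on generalizing F with
  | empty =>
    obtain rfl : F = 0 := ext fun d => by_contra fun hd => by simpa using hF d hd
    exact ⟨0, by simp, fun i => by simp⟩
  | insert j T hj ih =>
    let F₁ : MvPowerSeries σ R := fun d => if q ≤ d j then coeff d F else 0
    have coeff_F₁ (d) : coeff d F₁ = if q ≤ d j then coeff d F else 0 := rfl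
    obtain ⟨pj, hpj⟩ : X j ^ q ∣ F₁ :=
      X_pow_dvd_iff.2 fun d hd => by rw [coeff_F₁, if_neg (not_le.2 hd)]
    obtain ⟨p, hp, hord⟩ := ih (F - F₁) fun d hd => by
      rw [map_sub, coeff_F₁] at hd
      split_ifs at hd with hqd
      · exact absurd (sub_self _) hd
      · obtain ⟨i, hi, hqi⟩ := hF d (by simpa using hd)
        rcases Finset.mem_insert.1 hi with rfl | hiT
        · exact absurd hqi hqd
        · exact ⟨i, hiT, hqi⟩
    refine ⟨Function.update p j pj, ?_, fun i => ?_⟩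
    · rw [Finset.sum_insert hj, Function.update_self, ← hpj,
        Finset.sum_congr rfl fun i hi => by
          rw [Function.update_of_ne (ne_of_mem_of_not_mem hi hj)],
        ← hp, add_sub_cancel]
    · rcases eq_or_ne i j with rfl | hij
      · rw [Function.update_self, ← order_X_pow (R := R) i q, ← order_mul, ← hpj]
        refine order_le_order_of_coeff_eq_zero fun d hd => ?_
        simp [coeff_F₁, hd]
      · rw [Function.update_of_ne hij]
        refine le_trans (order_le_order_of_coeff_eq_zero fun d hd => ?_) (hord i)
        simp [coeff_F₁, hd]

theorem exists_eq_sum_X_pow_mul_of_X_pow_mul_eq {q : ℕ} {T : Finset σ} {j : σ} (hj : j ∉ T)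
    {F : MvPowerSeries σ R} {p : σ → MvPowerSeries σ R}
    (h : X j ^ q * F = ∑ i ∈ T, X i ^ q * p i) :
    ∃ p' : σ → MvPowerSeries σ R,
      F = ∑ i ∈ T, X i ^ q * p' i ∧ ∀ i, F.order ≤ q + (p' i).order := by
  refine exists_eq_sum_X_pow_mul q T F fun d hd => ?_
  have hcoeff : coeff (d + Finsupp.single j q) (X j ^ q * F) ≠ 0 := by
    rwa [X_pow_eq, coeff_monomial_mul, if_pos le_add_self, one_mul, add_tsub_cancel_right]
  rw [h, map_sum] at hcoeff
  obtain ⟨i, hi, hne⟩ := Finset.exists_ne_zero_of_sum_ne_zero hcoeff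
  refine ⟨i, hi, ?_⟩
  by_contra! hlt
  refine hne (X_pow_dvd_iff.1 (dvd_mul_right _ _) _ ?_)
  rwa [Finsupp.add_apply, Finsupp.single_eq_of_ne (ne_of_mem_of_not_mem hi hj), add_zero]

theorem exists_koszul_of_sum_X_pow_mul_eq_zero (q : ℕ) (T : Finset σ)
    (u : σ → MvPowerSeries σ R) (hu : ∑ i ∈ T, X i ^ q * u i = 0) (t : ℕ∞)
    (ht : ∀ i ∈ T, t ≤ (u i).order) :
    ∃ s : σ → σ → MvPowerSeries σ R,
      (∀ i ∈ T, u i = ∑ k ∈ T, X k ^ q * (s i k - s k i)) ∧ ∀ i k, t ≤ q + (s i k).order := by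
  classical
  induction T using Finset.induction_on generalizing u with
  | empty => exact ⟨0, by simp, fun i k => by simp⟩
  | insert j T hj ih =>
    rw [Finset.sum_insert hj] at hu
    have hu' : X j ^ q * u j = ∑ i ∈ T, X i ^ q * -u i := by
      simp only [mul_neg, Finset.sum_neg_distrib]
      exact eq_neg_of_add_eq_zero_left hu
    obtain ⟨p, hp, hpord⟩ := exists_eq_sum_X_pow_mul_of_X_pow_mul_eq hj hu'
    have hpt (k : σ) : t ≤ q + (p k).order := (ht j (mem_insert_self j T)).trans (hpord k)
    have hsyz : ∑ i ∈ T, X i ^ q * (u i + X j ^ q * p i) = 0 := by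
      rw [hp, Finset.mul_sum] at hu
      rw [← hu, add_comm, ← Finset.sum_add_distrib]
      exact Finset.sum_congr rfl fun i _ => by ring
    have hord (i) (hi : i ∈ T) : t ≤ (u i + X j ^ q * p i).order :=
      le_order_add (ht i (mem_insert_of_mem hi)) (by rw [order_mul, order_X_pow]; exact hpt i)
    obtain ⟨s, hs, hsord⟩ := ih _ hsyz hord
    obtain ⟨S, hSj, hSj', hS, hSord⟩ : ∃ S : σ → σ → MvPowerSeries σ R,
        (∀ k, S j k = p k) ∧ (∀ k ≠ j, S k j = 0) ∧ (∀ i ≠ j, ∀ k ≠ j, S i k = s i k) ∧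
        ∀ i k, t ≤ q + (S i k).order := by
      refine ⟨fun i k => if i = j then p k else if k = j then 0 else s i k, fun k => if_pos rfl,
        fun k hk => by simp [hk], fun i hi k hk => by simp [hi, hk], fun i k => ?_⟩
      dsimp only
      split_ifs
      · exact hpt k
      · simp
      · exact hsord i k
    refine ⟨S, fun i hi => ?_, hSord⟩
    rw [Finset.sum_insert hj]
    rcases Finset.mem_insert.1 hi with rfl | hiT
    · rw [hp, sub_self, mul_zero, zero_add]
      exact Finset.sum_congr rfl fun k hk => by
        rw [hSj, hSj' k (ne_of_mem_of_not_mem hk hj), sub_zero]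
    · have hij := ne_of_mem_of_not_mem hiT hj
      rw [hSj, hSj' i hij, Finset.sum_congr rfl fun k hk => by
        rw [hS i hij k (ne_of_mem_of_not_mem hk hj), hS k (ne_of_mem_of_not_mem hk hj) i hij]]
      linear_combination hs i hiT

end Monomial

section Perturbation

variable {σ K : Type*} [Field K]

theorem homogeneousComponent_X_pow (i : σ) (q : ℕ) :
    homogeneousComponent q (X i ^ q : MvPowerSeries σ K) = X i ^ q := by
  classical
  ext d
  rw [coeff_homogeneousComponent, coeff_X_pow]
  split_ifs with h1 h2 h2 <;> simp_all [Finsupp.degree_single]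

theorem le_order_C_mul_X_pow_sub {q : ℕ} (c : K) (i : σ) {r : MvPowerSeries σ K}
    (hr : ↑(q + 1) ≤ r.order) : (q : ℕ∞) ≤ (C c * X i ^ q - r).order :=
  le_order_sub (by rw [← smul_eq_C_mul]; exact (order_X_pow i q).ge.trans le_order_smul)
    (le_trans (by norm_cast; omega) hr)

theorem homogeneousComponent_C_mul_X_pow_sub_mul {q t : ℕ} (c : K) (i : σ)
    {r h : MvPowerSeries σ K} (hr : ↑(q + 1) ≤ r.order) (ht : t ≤ h.order) :
    homogeneousComponent (q + t) ((C c * X i ^ q - r) * h)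
      = C c * (X i ^ q * homogeneousComponent t h) := by
  rw [homogeneousComponent_mul_of_le_order (le_order_C_mul_X_pow_sub c i hr) ht, map_sub,
    ← smul_eq_C_mul, map_smul, homogeneousComponent_X_pow, homogeneousComponent_of_lt_order_eq_zero
      (lt_of_lt_of_le (by norm_cast; omega) hr), sub_zero, smul_eq_C_mul, mul_assoc]

variable {q : ℕ} {c : K} {g r : σ → MvPowerSeries σ K}

theorem exists_sum_mul_eq_with_higher_order (hc : c ≠ 0) (hg : ∀ i, g i = C c * X i ^ q - r i)
    (hr : ∀ i, ↑(q + 1) ≤ (r i).order) {T : Finset σ} {t : ℕ} {h : σ → MvPowerSeries σ K}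
    (hh : ∀ i ∈ T, ↑t ≤ (h i).order) (hsum : ↑(q + t + 1) ≤ (∑ i ∈ T, g i * h i).order) :
    ∃ h' : σ → MvPowerSeries σ K,
      ∑ i ∈ T, g i * h' i = ∑ i ∈ T, g i * h i ∧ ∀ i ∈ T, ↑(t + 1) ≤ (h' i).order := by
  set u : σ → MvPowerSeries σ K := fun i => homogeneousComponent t (h i)
  have hsyz : ∑ i ∈ T, X i ^ q * u i = 0 := by
    have h0 : homogeneousComponent (q + t) (∑ i ∈ T, g i * h i) = 0 :=
      homogeneousComponent_of_lt_order_eq_zero (lt_of_lt_of_le (by norm_cast; omega) hsum)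
    rw [map_sum, Finset.sum_congr rfl fun i hi => by
      rw [hg i, homogeneousComponent_C_mul_X_pow_sub_mul c i (hr i) (hh i hi)],
      ← Finset.mul_sum] at h0
    exact (mul_eq_zero.1 h0).resolve_left (by simpa using hc)
  obtain ⟨s, hs, hsord⟩ := exists_koszul_of_sum_X_pow_mul_eq_zero q T u hsyz t
    fun i _ => le_order_homogeneousComponent t (h i)
  -- Through `X k ^ q = c⁻¹ (g k + r k)`, the Koszul representation of the degree-`t` parts `u i`
  -- becomes the antisymmetric, hence vanishing, sum `∑ g i g k (s i k - s k i)` plus terms of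
  -- order `> t`.
  have hX (k : σ) : X k ^ q = C c⁻¹ * (g k + r k) := by
    rw [hg, sub_add_cancel, ← mul_assoc, ← map_mul, inv_mul_cancel₀ hc, map_one, one_mul]
  refine ⟨fun i => h i - u i + C c⁻¹ * ∑ k ∈ T, r k * (s i k - s k i), ?_, fun i hi => ?_⟩
  · have hanti : ∑ i ∈ T, ∑ k ∈ T, g i * g k * (s i k - s k i) = 0 := by
      simp only [mul_sub, Finset.sum_sub_distrib]
      rw [sub_eq_zero, Finset.sum_comm]
      exact Finset.sum_congr rfl fun i _ => Finset.sum_congr rfl fun k _ => by ring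
    have hu : ∑ i ∈ T, g i * u i = C c⁻¹ * ∑ i ∈ T, ∑ k ∈ T, g i * g k * (s i k - s k i)
        + ∑ i ∈ T, g i * (C c⁻¹ * ∑ k ∈ T, r k * (s i k - s k i)) := by
      rw [Finset.mul_sum, ← Finset.sum_add_distrib]
      refine Finset.sum_congr rfl fun i hi => ?_
      simp only [hs i hi, Finset.mul_sum, ← Finset.sum_add_distrib]
      exact Finset.sum_congr rfl fun k _ => by rw [hX]; ring
    have hexpand : ∑ i ∈ T, g i * (h i - u i + C c⁻¹ * ∑ k ∈ T, r k * (s i k - s k i))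
        = ∑ i ∈ T, g i * h i - ∑ i ∈ T, g i * u i
          + ∑ i ∈ T, g i * (C c⁻¹ * ∑ k ∈ T, r k * (s i k - s k i)) := by
      rw [← Finset.sum_sub_distrib, ← Finset.sum_add_distrib]
      exact Finset.sum_congr rfl fun i _ => by ring
    rw [hexpand, hu, hanti]
    ring
  · refine le_order_add (le_order_sub_homogeneousComponent (hh i hi)) ?_
    rw [← smul_eq_C_mul]
    refine le_trans (le_order_sum fun k _ => ?_) le_order_smul
    have hs' : ↑t ≤ ↑q + (s i k - s k i).order :=
      calc (t : ℕ∞) ≤ min (q + (s i k).order) (q + (s k i).order) :=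
            le_min (hsord i k) (hsord k i)
        _ = q + min (s i k).order (s k i).order := min_add_add_left _ _ _
        _ ≤ q + (s i k - s k i).order := by gcongr; exact min_order_le_sub
    exact le_order_mul_of_le_add (hr k) hs'

theorem exists_sum_mul_eq_with_le_order (hc : c ≠ 0) (hg : ∀ i, g i = C c * X i ^ q - r i)
    (hr : ∀ i, ↑(q + 1) ≤ (r i).order) (T : Finset σ) (N : ℕ) (h : σ → MvPowerSeries σ K)
    (hsum : ↑(q + N) ≤ (∑ i ∈ T, g i * h i).order) :
    ∃ h' : σ → MvPowerSeries σ K,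
      ∑ i ∈ T, g i * h' i = ∑ i ∈ T, g i * h i ∧ ∀ i ∈ T, ↑N ≤ (h' i).order := by
  induction N with
  | zero => exact ⟨h, rfl, fun i _ => by simp⟩
  | succ N ih =>
    obtain ⟨h₁, heq₁, hord₁⟩ := ih (le_trans (by norm_cast; omega) hsum)
    obtain ⟨h₂, heq₂, hord₂⟩ :=
      exists_sum_mul_eq_with_higher_order hc hg hr hord₁ (by rw [heq₁]; exact hsum)
    exact ⟨h₂, heq₂.trans heq₁, hord₂⟩

theorem exists_sub_mem_span_le_order (hc : c ≠ 0) (hg : ∀ i, g i = C c * X i ^ q - r i)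
    (hr : ∀ i, ↑(q + 1) ≤ (r i).order) {T : Finset σ} {j : σ} (hj : j ∉ T) (N : ℕ)
    (f : MvPowerSeries σ K) (hf : g j * f ∈ Ideal.span (g '' T)) :
    ∃ e, f - e ∈ Ideal.span (g '' T) ∧ ↑N ≤ e.order := by
  have mem_span {x : MvPowerSeries σ K} :
      x ∈ Ideal.span (g '' T) ↔ ∃ h : σ → MvPowerSeries σ K, ∑ i ∈ T, g i * h i = x := by
    simp only [Ideal.span, Submodule.mem_span_image_finset_iff_exists_fun', smul_eq_mul, mul_comm]
  induction N with
  | zero => exact ⟨f, by simp, by simp⟩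
  | succ N ih =>
    obtain ⟨e, hfe, he⟩ := ih
    have hge : g j * e ∈ Ideal.span (g '' T) := by
      simpa [mul_sub] using Ideal.sub_mem _ hf (Ideal.mul_mem_left _ (g j) hfe)
    obtain ⟨h, hh⟩ := mem_span.1 hge
    have hord : ↑(q + N) ≤ (∑ i ∈ T, g i * h i).order := by
      rw [hh, Nat.cast_add]
      exact (add_le_add (le_order_C_mul_X_pow_sub c j (hr j) |>.trans_eq (by rw [hg])) he).trans
        le_order_mul
    obtain ⟨h', hh', hh'ord⟩ := exists_sum_mul_eq_with_le_order hc hg hr T N h hord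
    have hdiv : X j ^ q * homogeneousComponent N e
        = ∑ i ∈ T, X i ^ q * homogeneousComponent N (h' i) := by
      have := congrArg (homogeneousComponent (q + N)) (hh'.trans hh)
      rw [map_sum, Finset.sum_congr rfl fun i hi => by
          rw [hg i, homogeneousComponent_C_mul_X_pow_sub_mul c i (hr i) (hh'ord i hi)],
        ← Finset.mul_sum, hg j, homogeneousComponent_C_mul_X_pow_sub_mul c j (hr j) he] at this
      exact (mul_left_cancel₀ (by simpa using hc) this).symm
    obtain ⟨p, hp, hpord⟩ := exists_eq_sum_X_pow_mul_of_X_pow_mul_eq hj hdiv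
    have hCc : C c * C c⁻¹ = (1 : MvPowerSeries σ K) := by
      rw [← map_mul, mul_inv_cancel₀ hc, map_one]
    refine ⟨e - ∑ i ∈ T, g i * (C c⁻¹ * p i), ?_, ?_⟩
    · rw [sub_sub_eq_add_sub, add_sub_right_comm]
      exact Ideal.add_mem _ hfe (mem_span.2 ⟨_, rfl⟩)
    · have hsplit : e - ∑ i ∈ T, g i * (C c⁻¹ * p i)
          = (e - homogeneousComponent N e) + C c⁻¹ * ∑ i ∈ T, r i * p i := by
        rw [← sub_add_sub_cancel e (homogeneousComponent N e), hp, ← Finset.sum_sub_distrib,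
          Finset.mul_sum]
        congr 1
        exact Finset.sum_congr rfl fun i _ => by
          rw [hg]
          linear_combination -(X i ^ q * p i) * hCc
      rw [hsplit, ← smul_eq_C_mul]
      refine le_order_add (le_order_sub_homogeneousComponent he)
        (le_trans (le_order_sum fun i _ => le_order_mul_of_le_add (hr i) ?_) le_order_smul)
      exact (le_order_homogeneousComponent N e).trans (hpord i)

end Perturbation

section Krull

open IsLocalRing

variable {σ K : Type*} [Field K]

theorem mem_maximalIdeal_of_one_le_order {f : MvPowerSeries σ K} (hf : 1 ≤ f.order) :
    f ∈ maximalIdeal (MvPowerSeries σ K) := by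
  rw [mem_maximalIdeal, mem_nonunits_iff, isUnit_iff_constantCoeff,
    one_le_order_iff_constCoeff_eq_zero.1 hf]
  exact not_isUnit_zero

variable [Fintype σ]

theorem mem_maximalIdeal_pow_of_le_order {N : ℕ} {f : MvPowerSeries σ K}
    (hf : ↑(Fintype.card σ * N + 1) ≤ f.order) : f ∈ maximalIdeal (MvPowerSeries σ K) ^ N := by
  -- A monomial of degree `> card σ * N` has an exponent `≥ N`.
  obtain ⟨p, rfl, -⟩ := exists_eq_sum_X_pow_mul N Finset.univ f fun d hd => by
    by_contra! hlt
    refine hd (coeff_of_lt_order (lt_of_lt_of_le ?_ hf))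
    have hdeg : d.degree ≤ Fintype.card σ * N := by
      rw [Finsupp.degree_eq_sum]
      calc ∑ i, d i ≤ ∑ _ : σ, N := Finset.sum_le_sum fun i hi => (hlt i hi).le
        _ = Fintype.card σ * N := by simp
    exact_mod_cast Nat.lt_succ_of_le hdeg
  exact Ideal.sum_mem _ fun i _ => Ideal.mul_mem_right _ _
    (Ideal.pow_mem_pow (mem_maximalIdeal_of_one_le_order (order_X i).ge) N)

theorem mem_of_forall_exists_sub_mem_le_order (I : Ideal (MvPowerSeries σ K))
    {f : MvPowerSeries σ K} (h : ∀ N : ℕ, ∃ e, f - e ∈ I ∧ ↑N ≤ e.order) : f ∈ I := by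
  have hKrull := Ideal.iInf_pow_smul_eq_bot_of_isLocalRing (M := MvPowerSeries σ K ⧸ I)
    (maximalIdeal (MvPowerSeries σ K)) (maximalIdeal.isMaximal _).ne_top
  rw [← Ideal.Quotient.eq_zero_iff_mem, ← Submodule.mem_bot (MvPowerSeries σ K), ← hKrull,
    Submodule.mem_iInf]
  intro k
  obtain ⟨e, hfe, he⟩ := h (Fintype.card σ * k + 1)
  rw [Ideal.Quotient.eq.2 hfe, ← mul_one (Ideal.Quotient.mk I e), ← Ideal.Quotient.algebraMap_eq,
    ← Algebra.smul_def]
  exact Submodule.smul_mem_smul (mem_maximalIdeal_pow_of_le_order he) Submodule.mem_top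

variable {q : ℕ} {c : K} {g r : σ → MvPowerSeries σ K}

theorem mem_span_of_mul_mem_span (hc : c ≠ 0) (hg : ∀ i, g i = C c * X i ^ q - r i)
    (hr : ∀ i, ↑(q + 1) ≤ (r i).order) {T : Finset σ} {j : σ} (hj : j ∉ T)
    {f : MvPowerSeries σ K} (hf : g j * f ∈ Ideal.span (g '' T)) : f ∈ Ideal.span (g '' T) :=
  mem_of_forall_exists_sub_mem_le_order _ fun N => exists_sub_mem_span_le_order hc hg hr hj N f hf

end Krull

section RegularSequence

open IsLocalRing RingTheory.Sequence

variable {K : Type*} [Field K] {n q : ℕ} {c : K} {g r : Fin n → MvPowerSeries (Fin n) K}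

theorem isRegular_ofFn (hq : 0 < q) (hc : c ≠ 0) (hg : ∀ i, g i = C c * X i ^ q - r i)
    (hr : ∀ i, ↑(q + 1) ≤ (r i).order) : IsRegular (MvPowerSeries (Fin n) K) (List.ofFn g) := by
  refine IsRegular.of_isWeaklyRegular_of_mem_maximalIdeal _ (fun x hx => ?_)
    ((isWeaklyRegular_iff_Fin _ _).2 fun i => ?_)
  · obtain ⟨j, rfl⟩ := List.mem_ofFn.1 hx
    refine mem_maximalIdeal_of_one_le_order ?_
    rw [hg]
    exact le_trans (by exact_mod_cast hq) (le_order_C_mul_X_pow_sub c j (hr j))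
  · have hi : (i : ℕ) < n := by simpa using i.2
    have hgi : (List.ofFn g)[i] = g ⟨i, hi⟩ := by simp
    rw [Ideal.smul_eq_mul, Ideal.mul_top, Ideal.ofList_take_ofFn, hgi,
      isSMulRegular_quotient_iff_mem_of_smul_mem]
    exact fun f hf => mem_span_of_mul_mem_span (j := ⟨i, hi⟩) hc hg hr (by simp) hf

end RegularSequence

end MvPowerSeries

theorem gPow_isRegular_sequence_general (n a : ℕ) (ha : 2 ≤ a) (han : a ≤ n - 1) :
    RingTheory.Sequence.IsRegular (MvPowerSeries (Fin n) ℂ) (List.ofFn (gPow n a)) := by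
  refine isRegular_ofFn (q := a - 1) (c := (a : ℂ)) (r := fun j => ∏ k ∈ univ.erase j, X k)
    (by omega) (by exact_mod_cast (by omega : a ≠ 0)) (fun j => by rw [gPow, map_natCast])
    fun j => ?_
  rw [order_prod, Finset.sum_congr rfl fun k _ => order_X k, sum_const,
    card_erase_of_mem (mem_univ j), card_univ, Fintype.card_fin, nsmul_one]
  exact_mod_cast (by omega : a - 1 + 1 ≤ n - 1)

/-- For `n ≥ 4` and `2 ≤ a ≤ n−1`, the `n` elements
`g_j = a·u_j^{a−1} − ∏_{k≠j} u_k` form a regular sequence in `P = ℂ⟦u₁,…,uₙ⟧`. -/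
theorem gPow_isRegular_sequence (n a : ℕ) (hn : 4 ≤ n) (ha : 2 ≤ a) (han : a ≤ n - 1) :
    RingTheory.Sequence.IsRegular (MvPowerSeries (Fin n) ℂ) (List.ofFn (gPow n a)) :=
  gPow_isRegular_sequence_general n a ha han
end

section
/- Let n ≥ 4 and 2 ≤ a ≤ n−1 be integers. In the formal power series ring P = ℂ⟦u₁,…,uₙ⟧, let J be the ideal generated by g_j := a·u_j^{a−1} − ∏_{k≠j} u_k for j = 1,…,n. Then (u₁⋯uₙ)^{a−1} ∈ J, and u_j^{a(a−1)} ∈ J for every j. -/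
/-!
Modulo `J` the generators say `∏_{k ≠ j} u_k ≡ a u_j^{a-1}`. Multiplying these over `j` gives
`U^{n-1} ≡ a^n U^{a-1}` for `U = u₁⋯uₙ`, i.e. `U^{a-1} (U^{n-a} - a^n) ∈ J`, and the second factor
is a unit of `P` because its constant term is `-a^n ≠ 0`. Multiplying the `j`-th relation by `u_j`
gives `U ≡ a u_j^a`, hence `a^{a-1} u_j^{a(a-1)} ≡ U^{a-1} ≡ 0`.
-/

open Finset MvPowerSeries

theorem Finset.prod_prod_erase_eq_pow_card_sub_one {ι M : Type*} [Fintype ι] [DecidableEq ι]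
    [CommMonoid M] (f : ι → M) :
    ∏ j, ∏ k ∈ univ.erase j, f k = (∏ j, f j) ^ (Fintype.card ι - 1) := by
  rw [prod_comm' (t' := univ) (s' := fun k => univ.erase k) (by simp [eq_comm])]
  simp [card_erase_of_mem, prod_pow]

section CriticalRelations

variable {ι A : Type*} [Fintype ι] [DecidableEq ι] {x : ι → A} {c : A} {b : ℕ}

theorem prod_eq_mul_pow_succ_of_prod_erase_eq [CommMonoid A]
    (hrel : ∀ j, ∏ k ∈ univ.erase j, x k = c * x j ^ b) (j : ι) :
    ∏ k, x k = c * x j ^ (b + 1) := by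
  rw [← prod_erase_mul univ x (mem_univ j), hrel, pow_succ, mul_assoc]

theorem prod_pow_card_sub_one_of_prod_erase_eq [CommMonoid A]
    (hrel : ∀ j, ∏ k ∈ univ.erase j, x k = c * x j ^ b) :
    (∏ k, x k) ^ (Fintype.card ι - 1) = c ^ Fintype.card ι * (∏ k, x k) ^ b := by
  rw [← prod_prod_erase_eq_pow_card_sub_one, prod_congr rfl fun j _ => hrel j,
    prod_mul_distrib, prod_const, card_univ, prod_pow]

variable [CommRing A]

theorem prod_pow_eq_zero_of_prod_erase_eq
    (hrel : ∀ j, ∏ k ∈ univ.erase j, x k = c * x j ^ b) (hb : b ≤ Fintype.card ι - 1)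
    (hunit : IsUnit ((∏ k, x k) ^ (Fintype.card ι - 1 - b) - c ^ Fintype.card ι)) :
    (∏ k, x k) ^ b = 0 := by
  have hsplit : (∏ k, x k) ^ b * ((∏ k, x k) ^ (Fintype.card ι - 1 - b) - c ^ Fintype.card ι)
      = 0 := by
    rw [mul_sub, ← pow_add, Nat.add_sub_cancel' hb, prod_pow_card_sub_one_of_prod_erase_eq hrel]
    ring
  exact hunit.mul_left_eq_zero.mp hsplit

theorem pow_mul_eq_zero_of_prod_erase_eq
    (hrel : ∀ j, ∏ k ∈ univ.erase j, x k = c * x j ^ b) (hb : b ≤ Fintype.card ι - 1)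
    (hunit : IsUnit ((∏ k, x k) ^ (Fintype.card ι - 1 - b) - c ^ Fintype.card ι))
    (hc : IsUnit c) (j : ι) :
    x j ^ ((b + 1) * b) = 0 := by
  have h := prod_pow_eq_zero_of_prod_erase_eq hrel hb hunit
  rw [prod_eq_mul_pow_succ_of_prod_erase_eq hrel j, mul_pow, ← pow_mul] at h
  exact (hc.pow b).mul_right_eq_zero.mp h

end CriticalRelations

namespace MvPowerSeries

variable {σ R : Type*}

theorem constantCoeff_prod_X [CommRing R] [Fintype σ] [Nonempty σ] :
    constantCoeff (∏ i, X i : MvPowerSeries σ R) = 0 := by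
  simp [map_prod, constantCoeff_X]

theorem isUnit_pow_sub [CommRing R] {f g : MvPowerSeries σ R} {m : ℕ} (hm : m ≠ 0)
    (hf : constantCoeff f = 0) (hg : IsUnit (constantCoeff g)) : IsUnit (f ^ m - g) := by
  rw [isUnit_iff_constantCoeff, map_sub, map_pow, hf, zero_pow hm, zero_sub]
  exact hg.neg

theorem isUnit_natCast {K : Type*} [Field K] [CharZero K] {a : ℕ} (ha : a ≠ 0) :
    IsUnit (a : MvPowerSeries σ K) := by
  rw [isUnit_iff_constantCoeff, map_natCast]
  exact isUnit_iff_ne_zero.mpr (Nat.cast_ne_zero.mpr ha)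

end MvPowerSeries

theorem mk_span_gPow_prod_erase_X {n a : ℕ} (j : Fin n) :
    Ideal.Quotient.mk (Ideal.span (Set.range (gPow n a))) (∏ k ∈ univ.erase j, X k) =
      Ideal.Quotient.mk _ (a : MvPowerSeries (Fin n) ℂ) *
        Ideal.Quotient.mk _ (X j) ^ (a - 1) := by
  have hg : gPow n a j ∈ Ideal.span (Set.range (gPow n a)) := Ideal.subset_span ⟨j, rfl⟩
  rw [← Ideal.Quotient.eq_zero_iff_mem, gPow, map_sub, sub_eq_zero] at hg
  rw [← hg, map_mul, map_pow]

theorem powers_mem_power_series_jacobian_ideal_general (n a : ℕ) (ha : 2 ≤ a)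
    (han : a ≤ n - 1) :
    ((∏ j, MvPowerSeries.X j : MvPowerSeries (Fin n) ℂ) ^ (a - 1)
        ∈ Ideal.span (Set.range (gPow n a))) ∧
      ∀ j : Fin n, (MvPowerSeries.X j : MvPowerSeries (Fin n) ℂ) ^ (a * (a - 1))
        ∈ Ideal.span (Set.range (gPow n a)) := by
  obtain ⟨b, rfl⟩ : ∃ b, a = b + 1 := ⟨a - 1, by omega⟩
  have : Nonempty (Fin n) := ⟨⟨0, by omega⟩⟩
  have hb : b ≤ Fintype.card (Fin n) - 1 := by rw [Fintype.card_fin]; omega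
  have hm : Fintype.card (Fin n) - 1 - b ≠ 0 := by rw [Fintype.card_fin]; omega
  set π := Ideal.Quotient.mk (Ideal.span (Set.range (gPow n (b + 1))))
  have hrel (j : Fin n) : ∏ k ∈ univ.erase j, π (X k) = π (b + 1 : ℕ) * π (X j) ^ b := by
    rw [← map_prod]
    exact mk_span_gPow_prod_erase_X j
  have hunit : IsUnit ((∏ k, π (X k)) ^ (Fintype.card (Fin n) - 1 - b)
      - π (b + 1 : ℕ) ^ Fintype.card (Fin n)) := by
    rw [← map_prod, ← map_pow, ← map_pow, ← map_sub]
    refine (isUnit_pow_sub hm constantCoeff_prod_X ?_).map π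
    simp [Nat.cast_add_one_ne_zero]
  have hc : IsUnit (π (b + 1 : ℕ)) := (isUnit_natCast b.succ_ne_zero).map π
  simp only [Nat.add_sub_cancel, ← Ideal.Quotient.eq_zero_iff_mem, map_pow, map_prod]
  exact ⟨prod_pow_eq_zero_of_prod_erase_eq hrel hb hunit,
    pow_mul_eq_zero_of_prod_erase_eq hrel hb hunit hc⟩

/-- For `n ≥ 4` and `2 ≤ a ≤ n−1`, in `P = ℂ⟦u₁,…,uₙ⟧` with `J` the ideal
generated by `g₁,…,gₙ`, we have `(u₁⋯uₙ)^{a−1} ∈ J` and `u_j^{a(a−1)} ∈ J` for all `j`. -/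
theorem powers_mem_power_series_jacobian_ideal (n a : ℕ) (hn : 4 ≤ n) (ha : 2 ≤ a)
    (han : a ≤ n - 1) :
    ((∏ j, MvPowerSeries.X j : MvPowerSeries (Fin n) ℂ) ^ (a - 1)
        ∈ Ideal.span (Set.range (gPow n a))) ∧
      ∀ j : Fin n, (MvPowerSeries.X j : MvPowerSeries (Fin n) ℂ) ^ (a * (a - 1))
        ∈ Ideal.span (Set.range (gPow n a)) :=
  powers_mem_power_series_jacobian_ideal_general n a ha han
end

section
/- Let n ≥ 1 and a ≥ 1 be integers. Let G be the group of vectors ζ ∈ ℂⁿ with ζ_j^a = 1 for all j and ∏_j ζ_j = 1, acting on the polynomial ring ℂ[u₁,…,uₙ] by the ℂ-algebra automorphisms sending u_j to ζ_j·u_j. Then the subalgebra of elements fixed by every element of G equals the ℂ-subalgebra of ℂ[u₁,…,uₙ] generated by the n+1 elements u₁⋯uₙ and u_j^a for j = 1,…,n. -/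
/-!
The substitution `X j ↦ ζ j • X j` multiplies the monomial `X^d` by the character value
`∏ ζ j ^ d j`, so a polynomial is invariant iff each monomial in its support is. Taking
`ζ = ω` at `j`, `ω⁻¹` at `k` and `1` elsewhere, with `ω` a primitive `a`-th root of unity,
shows that the exponents of an invariant monomial are all congruent mod `a` to a common `r`,
i.e. `X^d = (∏ X j)^r * ∏ (X j ^ a)^((d j - r) / a)`. Conversely both kinds of generators
are visibly invariant.
-/

open MvPolynomial

section Scaling

variable {σ R : Type*} [CommSemiring R]

theorem aeval_C_mul_X_monomial (ζ : σ → R) (d : σ →₀ ℕ) (c : R) :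
    aeval (fun j => C (ζ j) * X j) (monomial d c) =
      monomial d ((d.prod fun j e => ζ j ^ e) * c) := by
  rw [aeval_monomial, monomial_eq]
  simp only [mul_pow, Finsupp.prod_mul, ← C_pow, ← map_finsuppProd, algebraMap_eq, C_mul]
  ring

theorem coeff_aeval_C_mul_X (ζ : σ → R) (p : MvPolynomial σ R) (d : σ →₀ ℕ) :
    coeff d (aeval (fun j => C (ζ j) * X j) p) = (d.prod fun j e => ζ j ^ e) * coeff d p := by
  classical
  induction p using MvPolynomial.induction_on' with
  | monomial e c =>
    rw [aeval_C_mul_X_monomial, coeff_monomial, coeff_monomial]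
    split_ifs with h <;> simp [h]
  | add p q hp hq => simp only [map_add, coeff_add, hp, hq, mul_add]

theorem aeval_C_mul_X_eq_self_iff [IsRightCancelMulZero R] (ζ : σ → R) (p : MvPolynomial σ R) :
    aeval (fun j => C (ζ j) * X j) p = p ↔ ∀ d ∈ p.support, (d.prod fun j e => ζ j ^ e) = 1 := by
  simp only [MvPolynomial.ext_iff, coeff_aeval_C_mul_X, mem_support_iff]
  exact forall_congr' fun d => mul_left_eq_self₀.trans (by tauto)

end Scaling

theorem modEq_of_forall_prod_pow_eq_one {σ K : Type*} [Fintype σ] [DecidableEq σ]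
    [CommGroupWithZero K] {ω : K} {a : ℕ} (hω : IsPrimitiveRoot ω a) (hω₀ : ω ≠ 0) {d : σ → ℕ}
    (h : ∀ ζ : σ → K, (∀ j, ζ j ^ a = 1) → ∏ j, ζ j = 1 → ∏ j, ζ j ^ d j = 1) (j k : σ) :
    d j ≡ d k [MOD a] := by
  have prod_mulSingle_pow (i : σ) (x : K) : ∏ l, Pi.mulSingle i x l ^ d l = x ^ d i := by
    simp [Pi.mulSingle_apply, ite_pow]
  have hζa : (Pi.mulSingle j ω * Pi.mulSingle k ω⁻¹ : σ → K) ^ a = 1 := by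
    simp only [mul_pow, ← Pi.mulSingle_pow, inv_pow, hω.pow_eq_one, inv_one, Pi.mulSingle_one,
      mul_one]
  have hζ := h _ (fun i => congrFun hζa i) (by simp [Finset.prod_mul_distrib, hω₀])
  simp only [Pi.mul_apply, mul_pow, Finset.prod_mul_distrib, prod_mulSingle_pow, inv_pow] at hζ
  rw [← zpow_natCast, ← zpow_natCast, ← zpow_neg, ← zpow_add₀ hω₀, hω.zpow_eq_one_iff_dvd] at hζ
  exact (Nat.modEq_iff_dvd.mpr (by simpa [sub_eq_neg_add, add_comm] using hζ)).symm

theorem Complex.exists_isPrimitiveRoot_ne_zero (a : ℕ) : ∃ ω : ℂ, ω ≠ 0 ∧ IsPrimitiveRoot ω a := by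
  rcases eq_or_ne a 0 with rfl | ha
  · -- a primitive `0`-th root of unity is an element of infinite order
    refine ⟨2, two_ne_zero, ⟨pow_zero 2, fun l hl => ?_⟩⟩
    have : (2 : ℕ) ^ l = 1 := by exact_mod_cast hl
    simp_all
  · exact ⟨_, (isPrimitiveRoot_exp a ha).ne_zero ha, isPrimitiveRoot_exp a ha⟩

section Adjoin

variable {σ R : Type*} [Fintype σ] [CommSemiring R]

theorem monomial_mem_adjoin_of_modEq {a : ℕ} {d : σ →₀ ℕ} (hd : ∀ j k, d j ≡ d k [MOD a])
    (c : R) :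
    monomial d c ∈ Algebra.adjoin R
      (insert (∏ j, X j) (Set.range fun j => (X j : MvPolynomial σ R) ^ a)) := by
  obtain ⟨r, hr⟩ : ∃ r, ∀ j, d j = r + a * (d j / a) := by
    rcases isEmpty_or_nonempty σ with hσ | ⟨⟨j₀⟩⟩
    · exact ⟨0, isEmptyElim⟩
    · exact ⟨d j₀ % a, fun j => by rw [← hd j j₀, Nat.mod_add_div]⟩
  have hmon : monomial d c = C c * ((∏ j, X j) ^ r * ∏ j, (X j ^ a) ^ (d j / a)) := by
    rw [monomial_eq, Finsupp.prod_fintype _ _ fun _ => pow_zero _, ← Finset.prod_pow,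
      ← Finset.prod_mul_distrib]
    congr! with j
    rw [← pow_mul, ← pow_add, ← hr j]
  rw [hmon]
  refine Subalgebra.mul_mem _ (Subalgebra.algebraMap_mem _ c) (Subalgebra.mul_mem _ ?_ ?_)
  · exact Subalgebra.pow_mem _ (Algebra.subset_adjoin (Set.mem_insert _ _)) _
  · exact Subalgebra.prod_mem _ fun j _ => Subalgebra.pow_mem _
      (Algebra.subset_adjoin (Set.mem_insert_of_mem _ (Set.mem_range_self j))) _

theorem aeval_C_mul_X_eq_self_of_mem_adjoin {a : ℕ} {ζ : σ → R} (hζa : ∀ j, ζ j ^ a = 1)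
    (hζ : ∏ j, ζ j = 1) {p : MvPolynomial σ R}
    (hp : p ∈ Algebra.adjoin R
      (insert (∏ j, X j) (Set.range fun j => (X j : MvPolynomial σ R) ^ a))) :
    aeval (fun j => C (ζ j) * X j) p = p := by
  suffices hle : Algebra.adjoin R (insert (∏ j, X j) (Set.range fun j => X j ^ a)) ≤
      AlgHom.equalizer (aeval fun j => C (ζ j) * X j) (AlgHom.id R (MvPolynomial σ R)) from
    hle hp
  refine Algebra.adjoin_le ?_
  rintro x (rfl | ⟨j, rfl⟩) <;> rw [SetLike.mem_coe, AlgHom.mem_equalizer, AlgHom.id_apply]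
  · rw [map_prod]
    simp only [aeval_X]
    rw [Finset.prod_mul_distrib, ← map_prod, hζ, map_one, one_mul]
  · rw [map_pow, aeval_X, mul_pow, ← C_pow, hζa j, C_1, one_mul]

end Adjoin

theorem invariant_polynomials_eq_adjoin_general (n a : ℕ)
    (p : MvPolynomial (Fin n) ℂ) :
    (∀ ζ : Fin n → ℂ, (∀ j, ζ j ^ a = 1) → (∏ j, ζ j = 1) →
        aeval (fun j => C (ζ j) * X j) p = p)
      ↔ p ∈ Algebra.adjoin ℂ
          (insert (∏ j, X j : MvPolynomial (Fin n) ℂ)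
            (Set.range fun j : Fin n => (X j : MvPolynomial (Fin n) ℂ) ^ a)) := by
  refine ⟨fun h => ?_, fun hp ζ hζa hζ => aeval_C_mul_X_eq_self_of_mem_adjoin hζa hζ hp⟩
  obtain ⟨ω, hω₀, hω⟩ := Complex.exists_isPrimitiveRoot_ne_zero a
  rw [p.as_sum]
  refine Subalgebra.sum_mem _ fun d hd => monomial_mem_adjoin_of_modEq (fun j k => ?_) _
  refine modEq_of_forall_prod_pow_eq_one hω hω₀ (fun ζ hζa hζ => ?_) j k
  rw [← Finsupp.prod_fintype d _ fun _ => pow_zero _]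
  exact (aeval_C_mul_X_eq_self_iff ζ p).mp (h ζ hζa hζ) d hd

/-- For `n ≥ 1`, `a ≥ 1`, let the group of vectors `ζ ∈ ℂⁿ` with
`ζ_j^a = 1` for all `j` and `∏_j ζ_j = 1` act on `ℂ[u₁,…,uₙ]` by the ℂ-algebra
automorphisms `u_j ↦ ζ_j·u_j`.  A polynomial is fixed by every such automorphism iff it
lies in the ℂ-subalgebra generated by `u₁⋯uₙ` and `u_j^a`, `j = 1,…,n`. -/
theorem invariant_polynomials_eq_adjoin (n a : ℕ) (hn : 1 ≤ n) (ha : 1 ≤ a)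
    (p : MvPolynomial (Fin n) ℂ) :
    (∀ ζ : Fin n → ℂ, (∀ j, ζ j ^ a = 1) → (∏ j, ζ j = 1) →
        aeval (fun j => C (ζ j) * X j) p = p)
      ↔ p ∈ Algebra.adjoin ℂ
          (insert (∏ j, X j : MvPolynomial (Fin n) ℂ)
            (Set.range fun j : Fin n => (X j : MvPolynomial (Fin n) ℂ) ^ a)) :=
  invariant_polynomials_eq_adjoin_general n a p
end

section
/- Let n ≥ 4 and 2 ≤ a ≤ n−1 be integers. Suppose q ∈ ℤ, c : {1,…,n} → ℕ, and K₀, K₁ are subsets of {1,…,n} satisfying: (i) (n−2)·q + (2−a)·(Σ_k c_k) = 1, and (ii) for every k ∈ {1,…,n}, a·c_k + [k ∈ K₀] = [k ∈ K₁] + q, where [k ∈ K] denotes 1 if k ∈ K and 0 otherwise. Then K₀ = ∅ and K₁ = {1,…,n}. -/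
/-!
Write `d k = [k ∈ K₁] - [k ∈ K₀] ∈ {-1, 0, 1}`, so that `a c_k = q + d_k`. The case `a = 2` is
excluded by (i), since `n - 2 ≥ 2` cannot divide `1`. For `a ≥ 3`, `a` divides the differences
`d_j - d_k`, which lie in `[-2, 2]`, so `d` is a constant `δ`. Summing gives `a Σ c = n (q + δ)`,
and eliminating `Σ c` from (i) leaves `2 q (n - a) = a + (a - 2) n δ`. For `δ = 0` this reads
`2 a c (n - a) = a`, impossible by parity; for `δ = -1` the left side is nonnegative while the
right side is negative. Hence `δ = 1`, i.e. every `k` lies in `K₁` and not in `K₀`.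
-/

section IndicatorDiff

variable {ι : Type*} [DecidableEq ι] (K₁ K₀ : Finset ι) (k : ι)

def indicatorDiff : ℤ :=
  (if k ∈ K₁ then 1 else 0) - (if k ∈ K₀ then 1 else 0)

lemma abs_indicatorDiff_le_one : |indicatorDiff K₁ K₀ k| ≤ 1 := by
  unfold indicatorDiff
  split_ifs <;> norm_num

lemma indicatorDiff_eq_one_iff : indicatorDiff K₁ K₀ k = 1 ↔ k ∈ K₁ ∧ k ∉ K₀ := by
  unfold indicatorDiff
  split_ifs <;> simp_all

end IndicatorDiff

lemma Int.eq_of_abs_le_one_of_dvd_sub {a x y : ℤ} (ha : 3 ≤ a) (hx : |x| ≤ 1) (hy : |y| ≤ 1)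
    (h : a ∣ x - y) : x = y :=
  sub_eq_zero.1 <| Int.eq_zero_of_abs_lt_dvd h <| by linarith [abs_sub x y]

lemma eq_of_mul_eq_add_of_abs_le_one {ι : Type*} {a q : ℤ} {c d : ι → ℤ} (ha : 3 ≤ a)
    (hd : ∀ k, |d k| ≤ 1) (h : ∀ k, a * c k = q + d k) (j k : ι) : d j = d k :=
  Int.eq_of_abs_le_one_of_dvd_sub ha (hd j) (hd k) ⟨c j - c k, by linear_combination h k - h j⟩

lemma three_le_of_sub_two_mul_add_eq_one {n a q S : ℤ} (hn : 4 ≤ n) (ha : 2 ≤ a)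
    (h : (n - 2) * q + (2 - a) * S = 1) : 3 ≤ a := by
  by_contra! ha'
  have hq : (n - 2) * q = 1 := by rw [show a = 2 by omega] at h; linarith
  rcases Int.eq_one_or_neg_one_of_mul_eq_one hq with h' | h' <;> omega

lemma two_mul_mul_sub_eq {n a q S δ : ℤ} (h : (n - 2) * q + (2 - a) * S = 1)
    (hS : a * S = n * (q + δ)) : 2 * q * (n - a) = a + (a - 2) * n * δ := by
  linear_combination a * h - (2 - a) * hS

lemma eq_one_of_two_mul_mul_sub_eq {n a q c δ : ℤ} (ha : 3 ≤ a) (han : a < n) (hc : 0 ≤ c)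
    (hδ : |δ| ≤ 1) (hac : a * c = q + δ) (h : 2 * q * (n - a) = a + (a - 2) * n * δ) :
    δ = 1 := by
  rcases abs_le.1 hδ with ⟨hδl, hδu⟩
  obtain rfl | rfl | rfl : δ = -1 ∨ δ = 0 ∨ δ = 1 := by omega
  · have hq : 1 ≤ q := by nlinarith
    nlinarith
  · have hodd : 2 * (c * (n - a)) = 1 := by
      apply mul_left_cancel₀ (show a ≠ 0 by omega)
      linear_combination h + 2 * (n - a) * hac
    omega
  · rfl

/-- For `n ≥ 4` and `2 ≤ a ≤ n−1`: if `q ∈ ℤ`, `c : {1,…,n} → ℕ`, and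
subsets `K₀, K₁ ⊆ {1,…,n}` satisfy (i) `(n−2)·q + (2−a)·Σ_k c_k = 1` and
(ii) `a·c_k + [k ∈ K₀] = [k ∈ K₁] + q` for every `k`, then `K₀ = ∅` and `K₁ = {1,…,n}`. -/
theorem grading_constraint_forces_top_generator
    (n a : ℕ) (hn : 4 ≤ n) (ha : 2 ≤ a) (han : a ≤ n - 1)
    (q : ℤ) (c : Fin n → ℕ) (K₀ K₁ : Finset (Fin n))
    (h1 : ((n : ℤ) - 2) * q + (2 - (a : ℤ)) * (∑ k, (c k : ℤ)) = 1)
    (h2 : ∀ k, (a : ℤ) * (c k : ℤ) + (if k ∈ K₀ then 1 else 0)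
      = (if k ∈ K₁ then 1 else 0) + q) :
    K₀ = ∅ ∧ K₁ = Finset.univ := by
  have hac : ∀ k, (a : ℤ) * c k = q + indicatorDiff K₁ K₀ k := fun k => by
    unfold indicatorDiff; linarith [h2 k]
  have ha3 : (3 : ℤ) ≤ a := three_le_of_sub_two_mul_add_eq_one (by omega) (by omega) h1
  have hconst := eq_of_mul_eq_add_of_abs_le_one ha3 (abs_indicatorDiff_le_one K₁ K₀) hac
  let k₀ : Fin n := ⟨0, by omega⟩
  have hS : (a : ℤ) * ∑ k, (c k : ℤ) = n * (q + indicatorDiff K₁ K₀ k₀) := by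
    simp [Finset.mul_sum, hac, hconst _ k₀]
  have hδ : indicatorDiff K₁ K₀ k₀ = 1 :=
    eq_one_of_two_mul_mul_sub_eq ha3 (by omega) (Int.natCast_nonneg (c k₀))
      (abs_indicatorDiff_le_one K₁ K₀ k₀) (hac k₀) (two_mul_mul_sub_eq h1 hS)
  have hmem k : k ∈ K₁ ∧ k ∉ K₀ := (indicatorDiff_eq_one_iff K₁ K₀ k).1 (hconst k k₀ ▸ hδ)
  exact ⟨Finset.eq_empty_of_forall_notMem fun k => (hmem k).2,
    Finset.eq_univ_of_forall fun k => (hmem k).1⟩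
end

section
/- Let n ≥ 4 and 2 ≤ a ≤ n−1 be integers. There do not exist q ∈ ℤ, functions c, b : {1,…,n} → ℕ, and a subset K ⊆ {1,…,n} such that: (i) c_k ≥ 1 for every k; (ii) Σ_k b_k ≥ 2; (iii) 2 − Σ_k b_k = (n−2)·q + (2−a)·(Σ_k c_k); and (iv) for every k, [k ∈ K] + a·c_k = q + b_k, where [k ∈ K] denotes 1 if k ∈ K and 0 otherwise. -/
/-!
Summing the relations `[k ∈ K] + a c_k = q + b_k` over `k` and eliminating `Σ b` with the
remaining relation gives `|K| + 2 Σ c = 2q + 2`. Substituting `q` back in,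
`2 Σ b = (2 - n)|K| + 2(a - n) Σ c + 2n`, and since `a - n ≤ -1` and `Σ c ≥ n` the right-hand
side is at most `0`, contradicting `Σ b ≥ 2`.
-/

open Finset

lemma card_add_mul_sum_eq_card_mul_add_sum {ι : Type*} [Fintype ι] [DecidableEq ι]
    (K : Finset ι) (a q : ℤ) (c b : ι → ℤ) (h : ∀ k, (if k ∈ K then (1 : ℤ) else 0) + a * c k = q + b k) :
    #K + a * ∑ k, c k = Fintype.card ι * q + ∑ k, b k := by
  have hsum := Finset.sum_congr rfl fun k (_ : k ∈ univ) => h k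
  rw [sum_add_distrib, sum_add_distrib, ← mul_sum, sum_ite_mem, univ_inter] at hsum
  simpa [mul_comm] using hsum

lemma nonpos_of_add_mul_eq_mul_add {κ C B q n a : ℤ} (hκ : 0 ≤ κ) (hn : 2 ≤ n) (hC : n ≤ C)
    (ha : a ≤ n - 1) (hsum : κ + a * C = n * q + B) (hrel : 2 - B = (n - 2) * q + (2 - a) * C) :
    B ≤ 0 := by
  have hq : κ + 2 * C = 2 * q + 2 := by linear_combination hsum - hrel
  have hB : 2 * B = (2 - n) * κ + 2 * (a - n) * C + 2 * n := by
    linear_combination -2 * hsum + n * hq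
  linarith [mul_nonneg (sub_nonneg.2 hn) hκ, mul_le_mul_of_nonneg_right ha (by omega : 0 ≤ C)]

theorem no_higher_order_deformation_classes_general
    (n a : ℕ) (hn : 4 ≤ n) (han : a ≤ n - 1) :
    ¬ ∃ (q : ℤ) (c b : Fin n → ℕ) (K : Finset (Fin n)),
        (∀ k, 1 ≤ c k) ∧
        (2 ≤ ∑ k, b k) ∧
        (2 - (∑ k, (b k : ℤ)) = ((n : ℤ) - 2) * q + (2 - (a : ℤ)) * ∑ k, (c k : ℤ)) ∧
        (∀ k, (if k ∈ K then (1 : ℤ) else 0) + (a : ℤ) * (c k : ℤ) = q + (b k : ℤ)) := by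
  rintro ⟨q, c, b, K, hc, hb, hrel, hpoint⟩
  have hsum := card_add_mul_sum_eq_card_mul_add_sum K a q (fun k => (c k : ℤ))
    (fun k => (b k : ℤ)) hpoint
  rw [Fintype.card_fin] at hsum
  have hC : n ≤ ∑ k, c k := by
    simpa using card_nsmul_le_sum univ c 1 fun k _ => hc k
  have hB := nonpos_of_add_mul_eq_mul_add (Nat.cast_nonneg #K) (by omega) (by exact_mod_cast hC)
    (by omega) hsum hrel
  have hb' : (2 : ℤ) ≤ ∑ k, (b k : ℤ) := by exact_mod_cast hb
  omega

/-- For `n ≥ 4` and `2 ≤ a ≤ n−1`, there are no `q ∈ ℤ`,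
`c, b : {1,…,n} → ℕ`, and `K ⊆ {1,…,n}` such that: (i) `c_k ≥ 1` for all `k`;
(ii) `Σ_k b_k ≥ 2`; (iii) `2 − Σ_k b_k = (n−2)·q + (2−a)·Σ_k c_k`; and
(iv) `[k ∈ K] + a·c_k = q + b_k` for every `k`. -/
theorem no_higher_order_deformation_classes
    (n a : ℕ) (hn : 4 ≤ n) (ha : 2 ≤ a) (han : a ≤ n - 1) :
    ¬ ∃ (q : ℤ) (c b : Fin n → ℕ) (K : Finset (Fin n)),
        (∀ k, 1 ≤ c k) ∧
        (2 ≤ ∑ k, b k) ∧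
        (2 - (∑ k, (b k : ℤ)) = ((n : ℤ) - 2) * q + (2 - (a : ℤ)) * ∑ k, (c k : ℤ)) ∧
        (∀ k, (if k ∈ K then (1 : ℤ) else 0) + (a : ℤ) * (c k : ℤ) = q + (b k : ℤ)) :=
  no_higher_order_deformation_classes_general n a hn han
end

section
/- Let N ≥ 0 be an integer, let V_{−1}, V_0, …, V_N be complex vector spaces, and set M := V_{−1} ⊕ V_0 ⊕ ⋯ ⊕ V_N (with V_k understood to be the zero space for k < −1 or k > N). Suppose d : M → M is a ℂ-linear map with d ∘ d = 0, which decomposes as d = Σ_{i ≥ 0} d^{(i)}, where each d^{(i)} : M → M is a ℂ-linear map sending V_k into V_{k+1−2i} for every k (only finitely many d^{(i)} are nonzero, by boundedness of the grading). Suppose there exists a ℂ-linear map h : M → M sending V_k into V_{k−1} for every k and satisfying d^{(0)} ∘ h + h ∘ d^{(0)} = id_M. Then there exists a ℂ-linear map H : M → M with d ∘ H + H ∘ d = id_M; in particular the complex (M, d) is acyclic. -/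
/-!
Filter `M` by `F m = ⨁_{k ≤ m} V k`. Both `h` and the tail `d - D 0` lower this filtration by
one, so `d h + h d - 1 = (d - D 0) h + h (d - D 0)` lowers it by two and is nilpotent, the
filtration being finite. Hence `u = d h + h d` is a unit; it commutes with `d` because `d² = 0`,
and `H = h u⁻¹` is the required contracting homotopy.
-/

theorem exists_contracting_homotopy_of_isNilpotent {A : Type*} [Ring A] {d h : A} (hd : d * d = 0)
    (hnil : IsNilpotent (d * h + h * d - 1)) : ∃ H : A, d * H + H * d = 1 := by
  obtain ⟨u, hu⟩ : IsUnit (d * h + h * d) := by simpa using hnil.isUnit_add_one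
  have hdu : Commute d u := by
    change d * u = u * d
    rw [hu]
    simp only [mul_add, add_mul, ← mul_assoc, hd, zero_mul, zero_add]
    simp only [mul_assoc, hd, mul_zero, add_zero]
  refine ⟨h * ↑u⁻¹, ?_⟩
  calc d * (h * ↑u⁻¹) + h * ↑u⁻¹ * d = (d * h + h * d) * ↑u⁻¹ := by
        rw [mul_assoc h, ← hdu.units_inv_right.eq, add_mul, mul_assoc, mul_assoc]
    _ = 1 := by rw [← hu, Units.mul_inv]

section Filtration

variable {R M : Type*} [Semiring R] [AddCommMonoid M] [Module R M]

def LowersFiltration (F : ℤ → Submodule R M) (c : ℤ) (f : Module.End R M) : Prop :=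
  ∀ m, F m ≤ (F (m - c)).comap f

namespace LowersFiltration

variable {F : ℤ → Submodule R M} {a b c : ℤ} {f g : Module.End R M}

theorem add (hf : LowersFiltration F c f) (hg : LowersFiltration F c g) :
    LowersFiltration F c (f + g) :=
  fun m _ hx => (F (m - c)).add_mem (hf m hx) (hg m hx)

theorem mul (hf : LowersFiltration F a f) (hg : LowersFiltration F b g) :
    LowersFiltration F (a + b) (f * g) := by
  intro m x hx
  have := hf (m - b) (hg m hx)
  rwa [sub_sub, add_comm b] at this

theorem pow (hf : LowersFiltration F c f) (n : ℕ) : LowersFiltration F (n * c) (f ^ n) := by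
  induction n with
  | zero => intro m x hx; simpa using hx
  | succ n ih =>
    rw [pow_succ, Nat.cast_succ, add_one_mul]
    exact ih.mul hf

theorem finsum {ι : Sort*} {D : ι → Module.End R M} (hD : ∀ i, LowersFiltration F c (D i)) :
    LowersFiltration F c (∑ᶠ i, D i) :=
  finsum_induction _ (fun m _ _ => by simp) (fun _ _ => add) hD

theorem pow_eq_zero {m : ℤ} {n : ℕ} (hf : LowersFiltration F c f) (htop : F m = ⊤)
    (hbot : F (m - n * c) = ⊥) : f ^ n = 0 := by
  ext x
  have := hf.pow n m (htop ▸ Submodule.mem_top : x ∈ F m)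
  rwa [Submodule.mem_comap, hbot, Submodule.mem_bot] at this

end LowersFiltration

def degreeFiltration (V : ℤ → Submodule R M) (m : ℤ) : Submodule R M :=
  ⨆ (k) (_ : k ≤ m), V k

variable {V : ℤ → Submodule R M}

theorem le_degreeFiltration {k m : ℤ} (hkm : k ≤ m) : V k ≤ degreeFiltration V m :=
  le_iSup₂_of_le k hkm le_rfl

theorem degreeFiltration_mono : Monotone (degreeFiltration V) :=
  fun _ _ hmm' => iSup₂_le fun _ hk => le_degreeFiltration (hk.trans hmm')

theorem degreeFiltration_eq_bot {m : ℤ} (hV : ∀ k ≤ m, V k = ⊥) : degreeFiltration V m = ⊥ :=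
  eq_bot_iff.2 <| iSup₂_le fun k hk => (hV k hk).le

theorem degreeFiltration_eq_top {m : ℤ} (hV : iSup V = ⊤) (hVm : ∀ k, m < k → V k = ⊥) :
    degreeFiltration V m = ⊤ := by
  refine eq_top_iff.2 (hV ▸ iSup_le fun k => ?_)
  rcases le_or_gt k m with hk | hk
  · exact le_degreeFiltration hk
  · simp [hVm k hk]

theorem lowersFiltration_degreeFiltration {c : ℤ} {f : Module.End R M}
    (hf : ∀ k, V k ≤ (degreeFiltration V (k - c)).comap f) :
    LowersFiltration (degreeFiltration V) c f :=
  fun _ => iSup₂_le fun k hk =>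
    (hf k).trans (Submodule.comap_mono (degreeFiltration_mono (by omega)))

end Filtration

/-- Let `M` be a complex vector space which is the internal direct sum of
subspaces `V k` indexed by `k ∈ ℤ`, with `V k = 0` unless `−1 ≤ k ≤ N`.  Let
`d : M → M` be ℂ-linear with `d ∘ d = 0`, decomposing as `d = Σ_{i ≥ 0} D i` where each
`D i` sends `V k` into `V (k + 1 − 2i)` (only finitely many `D i` are nonzero).  If
there is a ℂ-linear `h : M → M` sending `V k` into `V (k − 1)` with
`D 0 ∘ h + h ∘ D 0 = id`, then there is a ℂ-linear `H : M → M` with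
`d ∘ H + H ∘ d = id`; in particular `(M, d)` is acyclic. -/
theorem contracting_homotopy_of_leading_term
    (N : ℕ) (M : Type*) [AddCommGroup M] [Module ℂ M]
    (V : ℤ → Submodule ℂ M)
    (hV : DirectSum.IsInternal V)
    (hVbdd : ∀ k : ℤ, (k < -1 ∨ (N : ℤ) < k) → V k = ⊥)
    (d : M →ₗ[ℂ] M) (hd2 : d ∘ₗ d = 0)
    (D : ℕ → (M →ₗ[ℂ] M))
    (hDdeg : ∀ (i : ℕ) (k : ℤ), (V k).map (D i) ≤ V (k + 1 - 2 * (i : ℤ)))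
    (hDfin : (Function.support D).Finite)
    (hdD : d = ∑ᶠ i, D i)
    (h : M →ₗ[ℂ] M)
    (hdeg : ∀ k : ℤ, (V k).map h ≤ V (k - 1))
    (hhom : D 0 ∘ₗ h + h ∘ₗ D 0 = LinearMap.id) :
    (∃ H : M →ₗ[ℂ] M, d ∘ₗ H + H ∘ₗ d = LinearMap.id) ∧
      ∀ x : M, d x = 0 → ∃ y : M, d y = x := by
  set F := degreeFiltration V
  have lowers_of_map_le {f : M →ₗ[ℂ] M} {c : ℤ} (hf : ∀ k, ∃ j ≤ k - c, (V k).map f ≤ V j) :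
      LowersFiltration F c f :=
    lowersFiltration_degreeFiltration fun k => by
      obtain ⟨j, hj, hfj⟩ := hf k
      exact Submodule.map_le_iff_le_comap.1 (hfj.trans (le_degreeFiltration hj))
  have hh : LowersFiltration F 1 h := lowers_of_map_le fun k => ⟨k - 1, le_rfl, hdeg k⟩
  have htail : LowersFiltration F 1 (d - D 0) := by
    rw [hdD, ← add_finsum_cond_ne 0 hDfin, add_sub_cancel_left]
    exact .finsum fun i => .finsum fun hi => lowers_of_map_le fun k => ⟨_, by omega, hDdeg i k⟩
  have he : LowersFiltration F 2 (d * h + h * d - 1) := by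
    have hhom' : D 0 * h + h * D 0 = 1 := hhom
    have : d * h + h * d - 1 = (d - D 0) * h + h * (d - D 0) := by
      rw [← hhom']; noncomm_ring
    rw [this]
    exact (htail.mul hh).add (hh.mul htail)
  have hnil : IsNilpotent (d * h + h * d - 1) :=
    ⟨N + 1, he.pow_eq_zero
      (degreeFiltration_eq_top hV.submodule_iSup_eq_top fun k hk => hVbdd k (.inr hk))
      (degreeFiltration_eq_bot fun k hk => hVbdd k (.inl (by omega)))⟩
  obtain ⟨H, hH⟩ := exists_contracting_homotopy_of_isNilpotent hd2 hnil
  refine ⟨⟨H, hH⟩, fun x hx => ⟨H x, ?_⟩⟩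
  simpa [Module.End.mul_apply, hx] using LinearMap.congr_fun hH x
end
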